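/- arXiv:1410.2822 — 11 statements merged into one kernel-verified Lean document; each statement's English description precedes it below -/
import Mathlib

section
/- Let A be an additive category, let X be an object of A, and let Γ = End_A(X) be its endomorphism ring. The functor Hom_A(X,−) : A → Mod Γ (sending an object Y to the right Γ-module Hom_A(X,Y), with Γ acting by precomposition) restricts to a fully faithful functor from add X to the category of finitely generated projective right Γ-modules. If moreover A has split idempotents, then this restricted functor is an equivalence of categories between add X and the category of finitely generated projective right Γ-modules. -/
open CategoryTheory CategoryTheory.Limits

attribute [local instance] CategoryTheory.Limits.hasBinaryBiproducts_of_finite_biproducts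

universe v u

/-- `Y` belongs to `add X` if `Y` is a direct summand of a finite direct sum of copies
of `X`. -/
def InAdd {A : Type u} [Category.{v} A] [Preadditive A] [HasFiniteBiproducts A]
    (X Y : A) : Prop :=
  ∃ (n : ℕ) (Z : A), Nonempty ((Y ⊞ Z) ≅ ⨁ (fun _ : Fin n => X))

/-- The left `End X`-module structure on `unop X ⟶ Y`, `r • f = r.unop ≫ f`, as in the older
Mathlib (`CategoryTheory.Preadditive.moduleEndLeft` for `X : Cᵒᵖ`). -/
instance moduleEndLeftOld {C : Type u} [Category.{v} C] [Preadditive C] {X : Cᵒᵖ} {Y : C} :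
    Module (End X) (Opposite.unop X ⟶ Y) where
  smul r f := r.unop ≫ f
  one_smul _ := Category.id_comp _
  mul_smul _ _ _ := Category.assoc _ _ _
  smul_add _ _ _ := Preadditive.comp_add _ _ _ _ _ _
  smul_zero _ := Limits.comp_zero
  add_smul _ _ _ := Preadditive.add_comp _ _ _ _ _ _
  zero_smul _ := Limits.zero_comp

/-- The functor `preadditiveCoyonedaObj` of the older Mathlib. -/
def preadditiveCoyonedaObjOld {C : Type u} [Category.{v} C] [Preadditive C] (Y : Cᵒᵖ) :
    C ⥤ ModuleCat.{v} (End Y) where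
  obj X := ModuleCat.of _ (Opposite.unop Y ⟶ X)
  map f := ModuleCat.ofHom
    { toFun := fun g => g ≫ f
      map_add' := fun _ _ => Preadditive.add_comp _ _ _ _ _ _
      map_smul' := fun _ _ => Category.assoc _ _ _ }

/-!
`Hom(X, -)` sends `⨁ᵢ X` to the free module `Γ^ι`, the summand inclusions going to the basis.
A morphism out of `⨁ᵢ X`, like a linear map out of `Γ^ι`, is freely prescribed on these, so
`Hom(X, -)` is fully faithful on `⨁ᵢ X`, hence on its retracts, which make up `add X`.
Conversely, a finitely generated projective module is a retract of some `Γⁿ = Hom(X, ⨁ X)`;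
by fullness the corresponding idempotent lifts to `⨁ X`, and splitting it and its complement
yields an object of `add X` realising the module.
-/

open Opposite

theorem ModuleCat.finite_of_retract {R : Type*} [Ring R] {M N : ModuleCat R}
    (h : Retract M N) [Module.Finite R N] : Module.Finite R M :=
  Module.Finite.of_surjective h.r.hom fun m => ⟨h.i m, by simp [← ModuleCat.comp_apply]⟩

theorem ModuleCat.projective_of_retract {R : Type*} [Ring R] {M N : ModuleCat R}
    (h : Retract M N) [Module.Projective R N] : Module.Projective R M :=
  Module.Projective.of_split h.i.hom h.r.hom (by rw [← ModuleCat.hom_comp, h.retract]; rfl)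

namespace CategoryTheory

section Retract

variable {C : Type*} [Category C] {Y W : C}

theorem Retract.map_bijective {D : Type*} [Category D] (h : Retract Y W) (F : C ⥤ D) {Y' : C}
    (hW : Function.Bijective (F.map : (W ⟶ Y') → (F.obj W ⟶ F.obj Y'))) :
    Function.Bijective (F.map : (Y ⟶ Y') → (F.obj Y ⟶ F.obj Y')) := by
  refine ⟨fun f f' hf => ?_, fun φ => ?_⟩
  · have hr : h.r ≫ f = h.r ≫ f' := hW.1 (by simp only [F.map_comp, hf])
    simpa using h.i ≫= hr
  · obtain ⟨d, hd⟩ := hW.2 (F.map h.r ≫ φ)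
    refine ⟨h.i ≫ d, ?_⟩
    rw [F.map_comp, hd, ← Category.assoc, ← F.map_comp, h.retract, F.map_id, Category.id_comp]

def Retract.isoOfSameIdempotent {Y' : C} (h : Retract Y W) (h' : Retract Y' W)
    (e : h.r ≫ h.i = h'.r ≫ h'.i) : Y ≅ Y' where
  hom := h.i ≫ h'.r
  inv := h'.i ≫ h.r
  hom_inv_id := by
    rw [Category.assoc, reassoc_of% e.symm]
    simp
  inv_hom_id := by
    rw [Category.assoc, reassoc_of% e]
    simp

theorem Functor.exists_retract_obj_iso_of_retract {D : Type*} [Category D]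
    [IsIdempotentComplete C] (F : C ⥤ D)
    (hW : Function.Bijective (F.map : (W ⟶ W) → (F.obj W ⟶ F.obj W))) {M : D}
    (h : Retract M (F.obj W)) : ∃ (Y : C) (_ : Retract Y W), Nonempty (F.obj Y ≅ M) := by
  obtain ⟨ε, hε⟩ := hW.2 (h.r ≫ h.i)
  have hεε : ε ≫ ε = ε := hW.1 (by simp [hε])
  obtain ⟨Y, i, e, hie, hei⟩ := IsIdempotentComplete.idempotents_split W ε hεε
  let hY : Retract Y W := ⟨i, e, hie⟩
  exact ⟨Y, hY, ⟨(hY.map F).isoOfSameIdempotent h (by simp [hY, ← F.map_comp, hei, hε])⟩⟩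

theorem Retract.exists_biprod_iso [Preadditive C] [HasBinaryBiproducts C]
    [IsIdempotentComplete C] (h : Retract Y W) : ∃ Z : C, Nonempty (Y ⊞ Z ≅ W) := by
  have hp : (𝟙 W - h.r ≫ h.i) ≫ (𝟙 W - h.r ≫ h.i) = 𝟙 W - h.r ≫ h.i := by
    simp [Preadditive.sub_comp, Preadditive.comp_sub]
  obtain ⟨Z, i, e, hie, hei⟩ := IsIdempotentComplete.idempotents_split W _ hp
  have hi : i ≫ h.r = 0 := by
    have : i ≫ h.r = (i ≫ e) ≫ i ≫ h.r := by rw [hie, Category.id_comp]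
    rw [this, Category.assoc, reassoc_of% hei]
    simp [Preadditive.sub_comp]
  have he : h.i ≫ e = 0 := by
    have : h.i ≫ e = h.i ≫ (e ≫ i) ≫ e := by rw [Category.assoc, hie, Category.comp_id]
    rw [this, hei]
    simp [Preadditive.comp_sub]
  refine ⟨Z, ⟨⟨biprod.desc h.i i, biprod.lift h.r e, ?_, ?_⟩⟩⟩
  · ext <;> simp [hi, he, hie]
  · rw [biprod.lift_desc, hei]
    abel

end Retract

section HomFromX

variable {A : Type u} [Category.{v} A] [Preadditive A] (X : A)

noncomputable def homBiproductLinearEquiv {ι : Type*} [HasBiproduct fun _ : ι => X] :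
    (preadditiveCoyonedaObjOld (op X)).obj (⨁ fun _ : ι => X) ≃ₗ[End (op X)]
      (ι → End (op X)) where
  toFun g k := ((g : X ⟶ ⨁ fun _ : ι => X) ≫ biproduct.π _ k).op
  invFun c := biproduct.lift fun k => (c k).unop
  map_add' g g' := by
    funext k
    exact congrArg Quiver.Hom.op (Preadditive.add_comp _ _ _ _ _ _)
  map_smul' r g := by
    funext k
    exact congrArg Quiver.Hom.op (Category.assoc r.unop (g : X ⟶ _) _)
  left_inv g := biproduct.hom_ext _ _ fun k => biproduct.lift_π _ _
  right_inv c := funext fun k => congrArg Quiver.Hom.op (biproduct.lift_π _ _)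

theorem preadditiveCoyonedaObjOld_map_biproduct_desc {ι : Type} [Fintype ι]
    [HasBiproduct fun _ : ι => X] {Y' : A}
    (φ : (preadditiveCoyonedaObjOld (op X)).obj (⨁ fun _ : ι => X) ⟶
      (preadditiveCoyonedaObjOld (op X)).obj Y') :
    (preadditiveCoyonedaObjOld (op X)).map
      (biproduct.desc fun k => φ (biproduct.ι (fun _ : ι => X) k)) = φ := by
  have hg (g : X ⟶ ⨁ fun _ : ι => X) :
      g = ∑ k, (g ≫ biproduct.π _ k) ≫ biproduct.ι (fun _ : ι => X) k := by
    conv_lhs =>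
      rw [← Category.comp_id g, ← biproduct.total (f := fun _ : ι => X), Preadditive.comp_sum]
    simp only [Category.assoc]
  ext (g : X ⟶ ⨁ fun _ : ι => X)
  change g ≫ biproduct.desc _ = φ g
  rw [hg g, Preadditive.sum_comp]
  refine (Finset.sum_congr rfl fun k _ => ?_).trans (map_sum φ.hom _ _).symm
  rw [Category.assoc]
  -- `End (op X)` acts by precomposition, so `φ` commutes with precomposing by `g ≫ π k`
  exact ((g ≫ biproduct.π _ k) ≫= biproduct.ι_desc _ k).trans
    (φ.hom.map_smul (g ≫ biproduct.π _ k).op (biproduct.ι (fun _ : ι => X) k)).symm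

instance {ι : Type*} [Finite ι] [HasBiproduct fun _ : ι => X] :
    Module.Finite (End (op X)) ((preadditiveCoyonedaObjOld (op X)).obj (⨁ fun _ : ι => X)) :=
  Module.Finite.equiv (homBiproductLinearEquiv X).symm

instance {ι : Type*} [Finite ι] [HasBiproduct fun _ : ι => X] :
    Module.Projective (End (op X)) ((preadditiveCoyonedaObjOld (op X)).obj (⨁ fun _ : ι => X)) :=
  Module.Projective.of_equiv (homBiproductLinearEquiv X).symm

theorem preadditiveCoyonedaObjOld_map_bijective_of_biproduct {ι : Type} [Fintype ι]
    [HasBiproduct fun _ : ι => X] (Y' : A) :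
    Function.Bijective
      ((preadditiveCoyonedaObjOld (op X)).map : ((⨁ fun _ : ι => X) ⟶ Y') → _) := by
  refine ⟨fun f f' hf => biproduct.hom_ext' _ _ fun k => ?_,
    fun φ => ⟨_, preadditiveCoyonedaObjOld_map_biproduct_desc X φ⟩⟩
  exact DFunLike.congr_fun (congrArg ModuleCat.Hom.hom hf) (biproduct.ι (fun _ : ι => X) k)

theorem exists_retract_preadditiveCoyonedaObjOld_biproduct [HasFiniteBiproducts A]
    (M : ModuleCat.{v} (End (op X))) [Module.Finite (End (op X)) M]
    [Module.Projective (End (op X)) M] :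
    ∃ n : ℕ, Nonempty
      (Retract M ((preadditiveCoyonedaObjOld (op X)).obj (⨁ fun _ : Fin n => X))) := by
  obtain ⟨n, q, hq⟩ := Module.Finite.exists_fin' (End (op X)) M
  obtain ⟨s, hs⟩ := Module.projective_lifting_property q LinearMap.id hq
  let hM : Retract M (ModuleCat.of (End (op X)) (Fin n → End (op X))) :=
    ⟨ModuleCat.ofHom s, ModuleCat.ofHom q, by ext m; exact DFunLike.congr_fun hs m⟩
  exact ⟨n, ⟨hM.trans (Retract.ofIso (homBiproductLinearEquiv X).toModuleIso.symm)⟩⟩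

end HomFromX

section InAdd

variable {A : Type u} [Category.{v} A] [Preadditive A] [HasFiniteBiproducts A] {X Y : A}

theorem InAdd.exists_retract (h : InAdd X Y) :
    ∃ n : ℕ, Nonempty (Retract Y (⨁ fun _ : Fin n => X)) := by
  obtain ⟨n, Z, ⟨φ⟩⟩ := h
  exact ⟨n, ⟨biprod.inl ≫ φ.hom, φ.inv ≫ biprod.fst, by simp⟩⟩

theorem inAdd_of_retract [IsIdempotentComplete A] {n : ℕ}
    (h : Retract Y (⨁ fun _ : Fin n => X)) : InAdd X Y :=
  let ⟨Z, hZ⟩ := h.exists_biprod_iso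
  ⟨n, Z, hZ⟩

end InAdd

end CategoryTheory

/-- Let `A` be an additive category, `X` an object and `Γ = End X` its endomorphism
ring.  The functor `Hom_A(X,-)` (with `Γ` acting by precomposition, i.e. landing in
modules over `End (op X) = Γᵒᵖ`, alias right `Γ`-modules) restricts to a fully faithful
functor from `add X` to the finitely generated projective right `Γ`-modules; if `A` has
split idempotents this restriction is moreover an equivalence (being in addition
essentially surjective onto the finitely generated projective right `Γ`-modules). -/
theorem addX_equiv_fg_projective_modules {A : Type u} [Category.{v} A] [Preadditive A]
    [HasFiniteBiproducts A] (X : A) :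
    (∀ Y : A, InAdd X Y →
      Module.Finite (End (Opposite.op X))
        ((preadditiveCoyonedaObjOld (Opposite.op X)).obj Y) ∧
      Module.Projective (End (Opposite.op X))
        ((preadditiveCoyonedaObjOld (Opposite.op X)).obj Y)) ∧
    (∀ (Y Y' : A), InAdd X Y → InAdd X Y' →
      Function.Bijective
        (fun f : Y ⟶ Y' => (preadditiveCoyonedaObjOld (Opposite.op X)).map f)) ∧
    (IsIdempotentComplete A →
      ∀ M : ModuleCat.{v} (End (Opposite.op X)),
        Module.Finite (End (Opposite.op X)) M → Module.Projective (End (Opposite.op X)) M →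
        ∃ Y : A, InAdd X Y ∧
          Nonempty ((preadditiveCoyonedaObjOld (Opposite.op X)).obj Y ≅ M)) := by
  refine ⟨fun Y hY => ?_, fun Y Y' hY _ => ?_, fun _ M _ _ => ?_⟩
  · obtain ⟨n, ⟨h⟩⟩ := hY.exists_retract
    exact ⟨ModuleCat.finite_of_retract (h.map _), ModuleCat.projective_of_retract (h.map _)⟩
  · obtain ⟨n, ⟨h⟩⟩ := hY.exists_retract
    exact h.map_bijective _ (preadditiveCoyonedaObjOld_map_bijective_of_biproduct X Y')
  · obtain ⟨n, ⟨h⟩⟩ := exists_retract_preadditiveCoyonedaObjOld_biproduct X M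
    obtain ⟨Y, hY, e⟩ := (preadditiveCoyonedaObjOld (op X)).exists_retract_obj_iso_of_retract
      (preadditiveCoyonedaObjOld_map_bijective_of_biproduct X _) h
    exact ⟨Y, inAdd_of_retract hY, e⟩
end

section
/- Let φ_i : X_i → Y_i (i = 1, …, n) be essential epimorphisms in an abelian category. Then the induced morphism φ_1 ⊕ … ⊕ φ_n : X_1 ⊕ … ⊕ X_n → Y_1 ⊕ … ⊕ Y_n between the direct sums is an essential epimorphism. -/
/-!
An epimorphism is essential exactly when its kernel is a superfluous subobject, i.e. `N + ker φ = X`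
forces `N = X`: both conditions say that a subobject `N` which, together with `ker φ`, generates `X`
is all of `X`. The kernel of `⊕ φᵢ` is `⊕ ker φᵢ`, the sum of the images in `⊕ Xᵢ` of the
superfluous subobjects `ker φᵢ ⊆ Xᵢ`. Images of superfluous subobjects are superfluous, and so are
finite sums of them: if `K₁ + K₂ + N = X`, then `K₂ + N = X` and hence `N = X`.
-/

open CategoryTheory CategoryTheory.Limits

attribute [local instance] CategoryTheory.Abelian.hasFiniteBiproducts

universe v u

/-- An epimorphism `φ : X ⟶ Y` is *essential* if every morphism `α : X' ⟶ X` for which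
`α ≫ φ` is an epimorphism is itself an epimorphism. -/
def IsEssentialEpi {A : Type u} [Category.{v} A] {X Y : A} (φ : X ⟶ Y) : Prop :=
  Epi φ ∧ ∀ ⦃X' : A⦄ (α : X' ⟶ X), Epi (α ≫ φ) → Epi α

section Superfluous

variable {A : Type u} [Category.{v} A]

/-- `k` has superfluous image: a quotient `c : X ⟶ X / N` with `N + im k = X` (that is, with
`k ≫ c` epi) vanishes, i.e. `N = X`. -/
def IsSuperfluous [HasZeroMorphisms A] {K X : A} (k : K ⟶ X) : Prop :=
  ∀ ⦃C : A⦄ (c : X ⟶ C), Epi (k ≫ c) → c = 0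

theorem isSuperfluous_zero [HasZeroMorphisms A] (K X : A) : IsSuperfluous (0 : K ⟶ X) :=
  fun C c hc => by
    rw [zero_comp] at hc
    exact (IsZero.of_epi_zero K C).eq_of_tgt _ _

namespace IsSuperfluous

section ZeroMorphisms

variable [HasZeroMorphisms A] {K X : A} {k : K ⟶ X}

theorem precomp (hk : IsSuperfluous k) {L : A} (g : L ⟶ K) : IsSuperfluous (g ≫ k) :=
  fun _ c hc => hk c (by rw [Category.assoc] at hc; exact epi_of_epi g _)

theorem comp (hk : IsSuperfluous k) {Y : A} (f : X ⟶ Y) : IsSuperfluous (k ≫ f) := by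
  intro C c hc
  rw [Category.assoc, hk (f ≫ c) hc, comp_zero, ← zero_comp (f := c)] at hc
  exact isSuperfluous_zero K Y c hc

end ZeroMorphisms

variable [Abelian A]

theorem biprod_desc {K₁ K₂ X : A} {k₁ : K₁ ⟶ X} {k₂ : K₂ ⟶ X} (h₁ : IsSuperfluous k₁)
    (h₂ : IsSuperfluous k₂) : IsSuperfluous (biprod.desc k₁ k₂) := by
  intro C c hc
  have : Epi c := epi_of_epi (biprod.desc k₁ k₂) c
  set q := cokernel.π (k₂ ≫ c)
  -- Modulo the image of `k₂`, the image of `k₁` alone generates `C`.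
  have hq : c ≫ q = 0 := by
    have hfst : biprod.desc k₁ k₂ ≫ c ≫ q = biprod.fst ≫ k₁ ≫ c ≫ q := by
      ext
      · simp
      · simp [q, ← Category.assoc k₂, cokernel.condition]
    have : Epi ((biprod.fst : K₁ ⊞ K₂ ⟶ K₁) ≫ k₁ ≫ c ≫ q) := by
      rw [← hfst, ← Category.assoc]
      infer_instance
    exact h₁ _ (epi_of_epi (biprod.fst : K₁ ⊞ K₂ ⟶ K₁) (k₁ ≫ c ≫ q))
  exact h₂ c (Abelian.epi_of_cokernel_π_eq_zero _ (zero_of_epi_comp c hq))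

theorem biproduct_desc {n : ℕ} {K : Fin n → A} {X : A} {k : ∀ i, K i ⟶ X}
    (h : ∀ i, IsSuperfluous (k i)) : IsSuperfluous (biproduct.desc k) := by
  induction n with
  | zero =>
    rw [show biproduct.desc k = 0 from biproduct.hom_ext' _ _ fun j => j.elim0]
    exact isSuperfluous_zero _ _
  | succ n ih =>
    have hsplit : biproduct.desc k =
        biprod.lift (biproduct.π K 0) (biproduct.lift fun i : Fin n => biproduct.π K i.succ) ≫
          biprod.desc (k 0) (biproduct.desc fun i : Fin n => k i.succ) := by
      rw [biprod.lift_desc, biproduct.lift_desc, biproduct.desc_eq, Fin.sum_univ_succ]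
    rw [hsplit]
    exact ((h 0).biprod_desc (ih fun i => h i.succ)).precomp _

theorem biproduct_map {n : ℕ} {K X : Fin n → A} {k : ∀ i, K i ⟶ X i}
    (h : ∀ i, IsSuperfluous (k i)) : IsSuperfluous (biproduct.map k) := by
  rw [show biproduct.map k = biproduct.desc fun i => k i ≫ biproduct.ι X i by
    rw [biproduct.map_eq, biproduct.desc_eq]]
  exact biproduct_desc fun i => (h i).comp _

end IsSuperfluous

variable [Abelian A]

/-- Both hypothesis and conclusion say `ker φ + ker c = X`. -/
theorem epi_kernel_ι_comp_of_epi_kernel_ι_comp {X Y C : A} {φ : X ⟶ Y} {c : X ⟶ C} [Epi φ]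
    [Epi c] (h : Epi (kernel.ι φ ≫ c)) : Epi (kernel.ι c ≫ φ) := by
  refine Preadditive.epi_of_cancel_zero _ fun {D} d hd => ?_
  have he := Abelian.comp_epiDesc c (φ ≫ d) (by rwa [Category.assoc] at hd)
  have he0 : Abelian.epiDesc c (φ ≫ d) _ = 0 := zero_of_epi_comp (kernel.ι φ ≫ c) (by
    rw [Category.assoc, he, kernel.condition_assoc, zero_comp])
  rw [he0, comp_zero] at he
  exact zero_of_epi_comp φ he.symm

theorem isEssentialEpi_iff {X Y : A} (φ : X ⟶ Y) :
    IsEssentialEpi φ ↔ Epi φ ∧ IsSuperfluous (kernel.ι φ) := by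
  refine and_congr_right fun _ => ⟨fun h C c hc => ?_, fun h X' α hα => ?_⟩
  · have : Epi c := epi_of_epi (kernel.ι φ) c
    have : Epi (kernel.ι c) := h _ (epi_kernel_ι_comp_of_epi_kernel_ι_comp hc)
    exact zero_of_epi_comp _ (kernel.condition c)
  · have hα' : Epi (kernel.ι (cokernel.π α) ≫ φ) := by
      rw [← kernel.lift_ι (cokernel.π α) α (cokernel.condition α), Category.assoc] at hα
      exact epi_of_epi (kernel.lift _ α _) _
    exact Abelian.epi_of_cokernel_π_eq_zero _ (h _ (epi_kernel_ι_comp_of_epi_kernel_ι_comp hα'))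

theorem kernel_ι_biproduct_map {J : Type} [Finite J] {X Y : J → A} (φ : ∀ i, X i ⟶ Y i) :
    kernel.ι (biproduct.map φ) =
      biproduct.lift (fun i => kernel.lift (φ i) (kernel.ι _ ≫ biproduct.π X i)
        (by rw [Category.assoc, ← biproduct.map_π, kernel.condition_assoc, zero_comp])) ≫
      biproduct.map fun i => kernel.ι (φ i) := by
  ext
  simp

end Superfluous

/-- Let `φ i : X i ⟶ Y i` (`i = 1, …, n`) be essential epimorphisms in an abelian
category.  Then the induced morphism `φ 1 ⊕ … ⊕ φ n` between the direct sums is an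
essential epimorphism. -/
theorem essentialEpi_biproduct_map {A : Type u} [Category.{v} A] [Abelian A] (n : ℕ)
    (X Y : Fin n → A) (φ : ∀ i, X i ⟶ Y i) (h : ∀ i, IsEssentialEpi (φ i)) :
    IsEssentialEpi (biproduct.map φ) := by
  simp only [isEssentialEpi_iff] at h ⊢
  have : ∀ i, Epi (φ i) := fun i => (h i).1
  refine ⟨inferInstance, ?_⟩
  rw [kernel_ι_biproduct_map]
  exact (IsSuperfluous.biproduct_map fun i => (h i).2).precomp _
end

section
/- Let A be a well-powered abelian category in which every family of subobjects of an object has a supremum. Let φ : X → Y be an epimorphism and let U = Ker φ, regarded as a subobject of X. Then: (1) if φ is essential, then U ≤ rad X; (2) if U ≤ rad X and X is finitely generated, then φ is essential. -/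
open CategoryTheory CategoryTheory.Limits

universe v u

/-- An object `X` is *finitely generated* if every nonempty directed family of subobjects
of `X` whose supremum is all of `X` already contains `X` (i.e. `⊤`) as a member. -/
def FinitelyGeneratedObj {A : Type u} [Category.{v} A] (X : A) : Prop :=
  ∀ S : Set (Subobject X), S.Nonempty → DirectedOn (· ≤ ·) S → IsLUB S ⊤ → ⊤ ∈ S

/-- Let `A` be a well-powered abelian category in which every family of subobjects of an
object has a supremum, let `φ : X ⟶ Y` be an epimorphism and `U = Ker φ`.  Then:
(1) if `φ` is essential, then `U ≤ rad X`, i.e. `U` is contained in every maximal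
subobject of `X`; (2) if `U ≤ rad X` and `X` is finitely generated, then `φ` is
essential.  (Here `rad X` is the intersection of all maximal subobjects of `X`, so
`U ≤ rad X` is expressed by saying that `U` is below every coatom of `Subobject X`.) -/
theorem essentialEpi_iff_kernel_le_radical {A : Type u} [Category.{v} A] [Abelian A]
    [WellPowered.{v} A]
    (hsup : ∀ (Z : A) (S : Set (Subobject Z)), ∃ U : Subobject Z, IsLUB S U)
    {X Y : A} (φ : X ⟶ Y) (hepi : Epi φ) :
    (IsEssentialEpi φ → ∀ M : Subobject X, IsCoatom M → kernelSubobject φ ≤ M) ∧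
    ((∀ M : Subobject X, IsCoatom M → kernelSubobject φ ≤ M) → FinitelyGeneratedObj X →
      IsEssentialEpi φ) := by
  constructor
  · rintro ⟨-, hess⟩ M hM
    by_contra hKM
    have htop : M ⊔ kernelSubobject φ = ⊤ := by
      refine hM.2 _ (lt_of_le_of_ne le_sup_left ?_)
      intro h
      exact hKM (h ▸ le_sup_right)
    have hepiM : Epi (M.arrow ≫ φ) := by
      rw [Preadditive.epi_iff_cancel_zero]
      intro Z g hg
      have hM' : M ≤ kernelSubobject (φ ≫ g) :=
        le_kernelSubobject _ _ (by rw [← Category.assoc]; exact hg)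
      have hK' : kernelSubobject φ ≤ kernelSubobject (φ ≫ g) :=
        le_kernelSubobject _ _ (by rw [← Category.assoc, kernelSubobject_arrow_comp, zero_comp])
      have hker : kernelSubobject (φ ≫ g) = ⊤ :=
        top_le_iff.mp (htop ▸ sup_le hM' hK')
      have h0 : (kernelSubobject (φ ≫ g)).arrow ≫ (φ ≫ g) = 0 :=
        kernelSubobject_arrow_comp _
      rw [hker] at h0
      have hφg : φ ≫ g = 0 := by
        rw [← cancel_epi ((⊤ : Subobject X).arrow), comp_zero]
        exact h0
      exact zero_of_epi_comp φ hφg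
    have := hess M.arrow hepiM
    have : IsIso M.arrow := isIso_of_mono_of_epi _
    exact hM.1 ((Subobject.isIso_arrow_iff_eq_top M).mp this)
  · rintro hrad hfg
    refine ⟨hepi, ?_⟩
    intro X' α hαφ
    set N := imageSubobject α with hNdef
    set K := kernelSubobject φ with hKdef
    set T := N ⊔ K with hTdef
    have hKT : K ≤ T := le_sup_right
    have hNT : N ≤ T := le_sup_left
    have hc : T.arrow ≫ cokernel.π T.arrow = 0 := cokernel.condition _
    have hKarr : K.arrow ≫ cokernel.π T.arrow = 0 := by
      rw [← Subobject.ofLE_arrow hKT, Category.assoc, hc, comp_zero]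
    have hNarr : N.arrow ≫ cokernel.π T.arrow = 0 := by
      rw [← Subobject.ofLE_arrow hNT, Category.assoc, hc, comp_zero]
    have hK0 : kernel.ι φ ≫ cokernel.π T.arrow = 0 := by
      rw [← kernelSubobject_arrow', Category.assoc, hKarr, comp_zero]
    have hd : φ ≫ Abelian.epiDesc φ (cokernel.π T.arrow) hK0 = cokernel.π T.arrow :=
      Abelian.comp_epiDesc _ _ _
    have hα0 : α ≫ cokernel.π T.arrow = 0 := by
      rw [← imageSubobject_arrow_comp α, Category.assoc, hNarr, comp_zero]
    have hd0 : Abelian.epiDesc φ (cokernel.π T.arrow) hK0 = 0 := by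
      apply zero_of_epi_comp (α ≫ φ)
      rw [Category.assoc, hd, hα0]
    have hcπ : cokernel.π T.arrow = 0 := by rw [← hd, hd0, comp_zero]
    have : Epi T.arrow := Abelian.epi_of_cokernel_π_eq_zero _ hcπ
    have hTtop : T = ⊤ :=
      (Subobject.isIso_arrow_iff_eq_top T).mp (isIso_of_mono_of_epi _)
    by_cases hN : N = ⊤
    · have : IsIso N.arrow := (Subobject.isIso_arrow_iff_eq_top N).mpr hN
      rw [← imageSubobject_arrow_comp α]
      exact epi_comp _ _
    · exfalso
      -- Zorn: find a coatom `M ≥ N`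
      set s : Set (Subobject X) := {T | N ≤ T ∧ T ≠ ⊤} with hsdef
      have hNs : N ∈ s := ⟨le_rfl, hN⟩
      obtain ⟨M, hNM, hMs, hMmax⟩ :
          ∃ M, N ≤ M ∧ M ∈ s ∧ ∀ z ∈ s, M ≤ z → z ≤ M := by
        obtain ⟨M, hNM, hMmax⟩ := zorn_le_nonempty₀ s (fun c hcs hchain y hyc => by
          obtain ⟨U, hU⟩ := hsup X c
          refine ⟨U, ⟨(hcs hyc).1.trans (hU.1 hyc), ?_⟩, fun z hz => hU.1 hz⟩
          intro hUtop
          rw [hUtop] at hU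
          have : ⊤ ∈ c := hfg c ⟨y, hyc⟩ hchain.directedOn hU
          exact (hcs this).2 rfl) N hNs
        exact ⟨M, hNM, hMmax.prop, fun z hz hMz => hMmax.le_of_ge hz hMz⟩
      have hMco : IsCoatom M := by
        refine ⟨hMs.2, fun b hb => ?_⟩
        by_contra hbtop
        exact absurd (hMmax b ⟨hNM.trans hb.le, hbtop⟩ hb.le) (not_le_of_gt hb)
      have h2 : (⊤ : Subobject X) ≤ M := by
        rw [← hTtop]
        exact sup_le hNM (hrad M hMco)
      exact hMs.2 (top_le_iff.mp h2)
end

section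
/- Let φ : P → S be an epimorphism in an abelian category such that P is projective and S is a simple object. Then the following are equivalent: (1) φ is a projective cover of S; (2) P has a maximal proper subobject that contains every proper subobject of P (i.e., there is a proper subobject U of P such that every proper subobject of P is ≤ U); (3) the endomorphism ring End(P) is a local ring. -/
open CategoryTheory CategoryTheory.Limits

universe v u

/-- A *projective cover* of `X` is an essential epimorphism `φ : P ⟶ X` with `P`
projective. -/
def IsProjectiveCover {A : Type u} [Category.{v} A] {P X : A} (φ : P ⟶ X) : Prop :=
  Projective P ∧ IsEssentialEpi φ

section Aux

variable {A : Type u} [Category.{v} A] [Abelian A]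

/-- φ is nonzero when its codomain is simple and it is epi. -/
lemma phi_ne_zero {P S : A} (φ : P ⟶ S) (hS : Simple S) (hepi : Epi φ) : φ ≠ 0 := by
  intro h
  apply CategoryTheory.id_nonzero S
  rw [← cancel_epi φ, h]
  simp

/-- A subobject containing the kernel, on which φ is epi, is everything. -/
lemma eq_top_of_epi_arrow_comp {P S : A} (φ : P ⟶ S) (hepi : Epi φ) (U : Subobject P)
    (hK : kernelSubobject φ ≤ U) (hU : Epi (U.arrow ≫ φ)) : U = ⊤ := by
  have w : kernel.ι φ ≫ cokernel.π U.arrow = 0 := by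
    have h1 : kernel.ι φ = (kernelSubobjectIso φ).inv ≫ (kernelSubobject φ).arrow := by
      simp
    have h2 : (kernelSubobject φ).arrow = Subobject.ofLE _ _ hK ≫ U.arrow :=
      (Subobject.ofLE_arrow hK).symm
    rw [h1, h2, Category.assoc, Category.assoc, cokernel.condition, comp_zero, comp_zero]
  have hcomp : φ ≫ Abelian.epiDesc φ (cokernel.π U.arrow) w = cokernel.π U.arrow :=
    Abelian.comp_epiDesc φ _ w
  have hz : (U.arrow ≫ φ) ≫ Abelian.epiDesc φ (cokernel.π U.arrow) w = (U.arrow ≫ φ) ≫ 0 := by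
    rw [Category.assoc, hcomp, cokernel.condition, comp_zero]
  have hd0 : Abelian.epiDesc φ (cokernel.π U.arrow) w = 0 := (cancel_epi (U.arrow ≫ φ)).mp hz
  have hπ0 : cokernel.π U.arrow = 0 := by rw [← hcomp, hd0, comp_zero]
  have : Epi U.arrow := Abelian.epi_of_cokernel_π_eq_zero _ hπ0
  have : IsIso U.arrow := isIso_of_mono_of_epi _
  exact (Subobject.isIso_arrow_iff_eq_top U).mp this

/-- A morphism to a simple object is epi or zero. -/
lemma epi_or_eq_zero {S : A} (hS : Simple S) {X : A} (f : X ⟶ S) : Epi f ∨ f = 0 := by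
  by_cases h : f = 0
  · exact Or.inr h
  · exact Or.inl (epi_of_nonzero_to_simple h)

/-- Under hypothesis (2), an epi endomorphism of `P` is an isomorphism. -/
lemma isIso_of_epi_endo {P : A} (hP : Projective P) (hP0 : 𝟙 P ≠ 0)
    {U : Subobject P} (hU : U ≠ ⊤) (hmax : ∀ V : Subobject P, V ≠ ⊤ → V ≤ U)
    (a : P ⟶ P) (ha : Epi a) : IsIso a := by
  set s : P ⟶ P := Projective.factorThru (𝟙 P) a with hs
  have hsa : s ≫ a = 𝟙 P := Projective.factorThru_comp _ _
  haveI hmono : Mono s := by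
    have : Mono (s ≫ a) := by rw [hsa]; infer_instance
    exact mono_of_mono s a
  by_cases hst : Subobject.mk s = ⊤
  · have hsiso : IsIso s := (Subobject.isIso_iff_mk_eq_top s).mpr hst
    have : a = inv s := by
      have h2 := congrArg (fun t => inv s ≫ t) hsa
      simpa using h2
    rw [this]; infer_instance
  · exfalso
    have hsU : Subobject.mk s ≤ U := hmax _ hst
    have hKt : Subobject.mk (kernel.ι a) ≠ ⊤ := by
      intro h
      have : IsIso (kernel.ι a) := (Subobject.isIso_iff_mk_eq_top _).mpr h
      have ha0 : a = 0 := by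
        rw [← cancel_epi (kernel.ι a), kernel.condition, comp_zero]
      apply hP0
      have := (cancel_epi a).mp (show a ≫ 𝟙 P = a ≫ 0 by rw [Category.comp_id, comp_zero, ha0])
      exact this
    have hKU : Subobject.mk (kernel.ι a) ≤ U := hmax _ hKt
    have hw : (𝟙 P - a ≫ s) ≫ a = 0 := by
      rw [Preadditive.sub_comp, Category.id_comp, Category.assoc, hsa, Category.comp_id, sub_self]
    have hl : kernel.lift a (𝟙 P - a ≫ s) hw ≫ kernel.ι a = 𝟙 P - a ≫ s := kernel.lift_ι _ _ _
    set c : P ⟶ (U : A) := a ≫ Subobject.ofMkLE s U hsU +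
        kernel.lift a (𝟙 P - a ≫ s) hw ≫ Subobject.ofMkLE (kernel.ι a) U hKU with hc
    have hfac : c ≫ U.arrow = 𝟙 P := by
      rw [hc, Preadditive.add_comp, Category.assoc, Category.assoc, Subobject.ofMkLE_arrow,
        Subobject.ofMkLE_arrow, hl, add_sub_cancel]
    have : Epi U.arrow := by
      haveI h1 : Epi (c ≫ U.arrow) := by rw [hfac]; infer_instance
      exact epi_of_epi c U.arrow
    have : IsIso U.arrow := isIso_of_mono_of_epi _
    exact hU ((Subobject.isIso_arrow_iff_eq_top U).mp this)

/-- Under hypothesis (2), if `a` is not epi then `𝟙 P - a` is epi. -/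
lemma epi_one_sub_of_not_epi {P : A} {U : Subobject P} (hU : U ≠ ⊤)
    (hmax : ∀ V : Subobject P, V ≠ ⊤ → V ≤ U) (a : P ⟶ P) (ha : ¬ Epi a) :
    Epi (𝟙 P - a) := by
  have himage : ∀ (b : P ⟶ P), Subobject.mk (image.ι b) = ⊤ → Epi b := by
    intro b hb
    have : IsIso (image.ι b) := (Subobject.isIso_iff_mk_eq_top _).mpr hb
    have : Epi (factorThruImage b ≫ image.ι b) := epi_comp _ _
    rw [image.fac b] at this
    exact this
  by_cases h2 : Subobject.mk (image.ι (𝟙 P - a)) = ⊤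
  · exact himage _ h2
  · exfalso
    have h1 : Subobject.mk (image.ι a) ≠ ⊤ := fun h => ha (himage _ h)
    have h1U : Subobject.mk (image.ι a) ≤ U := hmax _ h1
    have h2U : Subobject.mk (image.ι (𝟙 P - a)) ≤ U := hmax _ h2
    have hfa : (factorThruImage a ≫ Subobject.ofMkLE (image.ι a) U h1U) ≫ U.arrow = a := by
      rw [Category.assoc, Subobject.ofMkLE_arrow, image.fac]
    have hfb : (factorThruImage (𝟙 P - a) ≫ Subobject.ofMkLE (image.ι (𝟙 P - a)) U h2U) ≫
        U.arrow = 𝟙 P - a := by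
      rw [Category.assoc, Subobject.ofMkLE_arrow, image.fac]
    set c : P ⟶ (U : A) := factorThruImage a ≫ Subobject.ofMkLE (image.ι a) U h1U +
        factorThruImage (𝟙 P - a) ≫ Subobject.ofMkLE (image.ι (𝟙 P - a)) U h2U with hc
    have hfac : c ≫ U.arrow = 𝟙 P := by
      rw [hc, Preadditive.add_comp, hfa, hfb, add_sub_cancel]
    have : Epi U.arrow := by
      haveI h1 : Epi (c ≫ U.arrow) := by rw [hfac]; infer_instance
      exact epi_of_epi c U.arrow
    have : IsIso U.arrow := isIso_of_mono_of_epi _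
    exact hU ((Subobject.isIso_arrow_iff_eq_top U).mp this)

/-- An endomorphism which is an isomorphism is a unit in the endomorphism ring. -/
lemma isUnit_End_of_isIso {P : A} (f : End P) (h : IsIso (f : P ⟶ P)) : IsUnit f :=
  ⟨⟨f, inv (f : P ⟶ P), IsIso.inv_hom_id (f : P ⟶ P), IsIso.hom_inv_id (f : P ⟶ P)⟩, rfl⟩

/-- A unit in the endomorphism ring is an isomorphism. -/
lemma isIso_End_of_isUnit {P : A} (f : End P) (h : IsUnit f) : IsIso (f : P ⟶ P) := by
  obtain ⟨u, rfl⟩ := h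
  exact ⟨u.inv, u.inv_val, u.val_inv⟩

end Aux

/-- Let `φ : P ⟶ S` be an epimorphism in an abelian category with `P` projective and `S`
simple.  The following are equivalent: (1) `φ` is a projective cover of `S`;
(2) `P` has a proper subobject containing every proper subobject of `P`;
(3) the endomorphism ring of `P` is local. -/
theorem projectiveCover_of_simple_tfae {A : Type u} [Category.{v} A] [Abelian A]
    {P S : A} (φ : P ⟶ S) (hP : Projective P) (hS : Simple S) (hepi : Epi φ) :
    (IsProjectiveCover φ ↔
      ∃ U : Subobject P, U ≠ ⊤ ∧ ∀ V : Subobject P, V ≠ ⊤ → V ≤ U) ∧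
    (IsProjectiveCover φ ↔ IsLocalRing (End P)) := by
  have hφ0 : φ ≠ 0 := phi_ne_zero φ hS hepi
  have hP0 : 𝟙 P ≠ 0 := by
    intro h
    apply hφ0
    rw [← Category.id_comp φ, h, zero_comp]
  have hKne : kernelSubobject φ ≠ ⊤ := by
    intro h
    apply hφ0
    have : IsIso (kernelSubobject φ).arrow := by
      rw [Subobject.isIso_arrow_iff_eq_top]; exact h
    rw [← cancel_epi (kernelSubobject φ).arrow, kernelSubobject_arrow_comp, comp_zero]
  -- (1) → (2)
  have h12 : IsProjectiveCover φ →
      ∃ U : Subobject P, U ≠ ⊤ ∧ ∀ V : Subobject P, V ≠ ⊤ → V ≤ U := by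
    rintro ⟨-, hess⟩
    refine ⟨kernelSubobject φ, hKne, fun V hV => ?_⟩
    rcases epi_or_eq_zero hS (V.arrow ≫ φ) with h | h
    · exfalso
      have : Epi V.arrow := hess.2 V.arrow h
      have : IsIso V.arrow := isIso_of_mono_of_epi _
      exact hV ((Subobject.isIso_arrow_iff_eq_top V).mp this)
    · exact le_kernelSubobject φ V h
  -- (2) → (1)
  have h21 : (∃ U : Subobject P, U ≠ ⊤ ∧ ∀ V : Subobject P, V ≠ ⊤ → V ≤ U) →
      IsProjectiveCover φ := by
    rintro ⟨U, hU, hmax⟩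
    refine ⟨hP, hepi, fun X' α hα => ?_⟩
    have hfac : factorThruImageSubobject α ≫ (imageSubobject α).arrow = α :=
      imageSubobject_arrow_comp α
    have hWepi : Epi ((imageSubobject α).arrow ≫ φ) := by
      have : Epi (factorThruImageSubobject α ≫ ((imageSubobject α).arrow ≫ φ)) := by
        rw [← Category.assoc, hfac]; exact hα
      exact epi_of_epi (factorThruImageSubobject α) _
    have hWtop : imageSubobject α = ⊤ := by
      by_contra hWne
      have hWU : imageSubobject α ≤ U := hmax _ hWne
      have hKU : kernelSubobject φ ≤ U := hmax _ hKne
      have hUepi : Epi (U.arrow ≫ φ) := by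
        have harr : (imageSubobject α).arrow = Subobject.ofLE _ _ hWU ≫ U.arrow :=
          (Subobject.ofLE_arrow hWU).symm
        have : Epi (Subobject.ofLE _ _ hWU ≫ (U.arrow ≫ φ)) := by
          rw [← Category.assoc, ← harr]; exact hWepi
        exact epi_of_epi (Subobject.ofLE _ _ hWU) _
      exact hU (eq_top_of_epi_arrow_comp φ hepi U hKU hUepi)
    have : IsIso (imageSubobject α).arrow := by
      rw [Subobject.isIso_arrow_iff_eq_top]; exact hWtop
    rw [← hfac]
    exact epi_comp _ _
  -- (2) → (3)
  have h23 : (∃ U : Subobject P, U ≠ ⊤ ∧ ∀ V : Subobject P, V ≠ ⊤ → V ≤ U) →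
      IsLocalRing (End P) := by
    rintro ⟨U, hU, hmax⟩
    have hnt : Nontrivial (End P) := ⟨1, 0, fun h => hP0 h⟩
    refine { toNontrivial := hnt, isUnit_or_isUnit_of_add_one := ?_ }
    intro a b hab
    have hab' : (show P ⟶ P from a) + (show P ⟶ P from b) = 𝟙 P := hab
    have hb : (show P ⟶ P from b) = 𝟙 P - (show P ⟶ P from a) := eq_sub_of_add_eq' hab'
    by_cases ha : Epi (show P ⟶ P from a)
    · exact Or.inl (isUnit_End_of_isIso a (isIso_of_epi_endo hP hP0 hU hmax _ ha))
    · refine Or.inr (isUnit_End_of_isIso b ?_)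
      have h1 : Epi (𝟙 P - (show P ⟶ P from a)) := epi_one_sub_of_not_epi hU hmax _ ha
      show IsIso (show P ⟶ P from b)
      rw [hb]
      exact isIso_of_epi_endo hP hP0 hU hmax _ (by rw [← hb]; rw [hb]; exact h1)
  -- (3) → (1)
  have h31 : IsLocalRing (End P) → IsProjectiveCover φ := by
    intro hloc
    refine ⟨hP, hepi, fun X' α hα => ?_⟩
    have hcomp : Projective.factorThru φ (α ≫ φ) ≫ (α ≫ φ) = φ := Projective.factorThru_comp _ _
    set f : P ⟶ P := Projective.factorThru φ (α ≫ φ) ≫ α with hf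
    have hfφ : f ≫ φ = φ := by rw [hf, Category.assoc]; exact hcomp
    have huv : (show End P from f) + (show End P from 𝟙 P - f) = 1 :=
      show f + (𝟙 P - f) = 𝟙 P from add_sub_cancel f (𝟙 P)
    rcases IsLocalRing.isUnit_or_isUnit_of_add_one huv with hu | hu
    · have : IsIso f := isIso_End_of_isUnit _ hu
      have hfe : Epi f := inferInstance
      rw [hf] at hfe
      exact epi_of_epi (Projective.factorThru φ (α ≫ φ)) α
    · exfalso
      apply hφ0
      have hiso : IsIso (𝟙 P - f) := isIso_End_of_isUnit _ hu
      have h0 : (𝟙 P - f) ≫ φ = 0 := by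
        rw [Preadditive.sub_comp, Category.id_comp, hfφ, sub_self]
      rw [← cancel_epi (𝟙 P - f), h0, comp_zero]
  exact ⟨⟨h12, h21⟩, ⟨fun h => h23 (h12 h), h31⟩⟩
end

section
/- Let A be a well-powered abelian category in which every family of subobjects of an object has a supremum, and let X be a finitely generated projective object of A. For a subobject U of X set End(U|X) = {φ ∈ End_A(X) : the image of φ is ≤ U}. Then the maps sending a subobject U of X to End(U|X), and sending a right ideal a of End_A(X) to the supremum of all subobjects V of X with End(V|X) ⊆ a, induce mutually inverse bijections between the set of maximal proper subobjects of X and the set of maximal right ideals of the ring End_A(X). -/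
open CategoryTheory CategoryTheory.Limits

universe v u

/-- For a subobject `U` of `X`, `endSub U` is the set `End(U|X)` of endomorphisms of `X`
whose image is contained in `U`. -/
noncomputable def endSub {A : Type u} [Category.{v} A] [Abelian A] {X : A}
    (U : Subobject X) : Set (End X) :=
  {φ : End X | imageSubobject φ ≤ U}

section Aux

variable {A : Type u} [Category.{v} A] [Abelian A] {X : A}

theorem imageSubobject_congr' {Y Z : A} {f g : Y ⟶ Z} (h : f = g) :
    imageSubobject f = imageSubobject g := by subst h; rfl

theorem imageSubobject_le_iff_factors' {Y : A} (φ : Y ⟶ X) (U : Subobject X) :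
    imageSubobject φ ≤ U ↔ U.Factors φ := by
  constructor
  · intro h
    have : U.Factors ((factorThruImageSubobject φ ≫ Subobject.ofLE _ _ h) ≫ U.arrow) :=
      Subobject.factors_comp_arrow _
    simpa [Category.assoc, Subobject.ofLE_arrow, imageSubobject_arrow_comp] using this
  · intro hf
    exact imageSubobject_le φ (U.factorThru φ hf) (U.factorThru_arrow φ hf)

theorem mem_endSub_iff_factors (U : Subobject X) (φ : End X) :
    φ ∈ endSub U ↔ U.Factors φ :=
  imageSubobject_le_iff_factors' φ U

omit [Abelian A] in
theorem eq_top_of_factors_id (U : Subobject X) (h : U.Factors (𝟙 X)) : U = ⊤ := by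
  obtain ⟨g, hg⟩ : ∃ g, g ≫ U.arrow = 𝟙 X := by
    exact ⟨U.factorThru _ h, U.factorThru_arrow _ h⟩
  haveI : IsSplitEpi U.arrow := ⟨⟨⟨g, hg⟩⟩⟩
  haveI : IsIso U.arrow := isIso_of_mono_of_isSplitEpi _
  exact U.eq_top_of_isIso_arrow

theorem lift_of_factors_image (hproj : Projective X) {Y : A} (k : Y ⟶ X) (φ : X ⟶ X)
    (h : (imageSubobject k).Factors φ) : ∃ ρ : X ⟶ Y, φ = ρ ≫ k := by
  obtain ⟨ρ, hρ⟩ : ∃ ρ : X ⟶ Y,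
      ρ ≫ factorThruImageSubobject k = (imageSubobject k).factorThru φ h := by
    haveI := hproj
    exact ⟨Projective.factorThru _ _, Projective.factorThru_comp _ _⟩
  exact ⟨ρ, by
    rw [← Subobject.factorThru_arrow _ φ h, ← hρ, Category.assoc, imageSubobject_arrow_comp]⟩

theorem sup_eq_image_biprod (V W : Subobject X) :
    V ⊔ W = imageSubobject (biprod.desc V.arrow W.arrow) := by
  apply le_antisymm
  · apply sup_le
    · calc V = imageSubobject V.arrow := by rw [imageSubobject_mono, Subobject.mk_arrow]
        _ = imageSubobject (biprod.inl ≫ biprod.desc V.arrow W.arrow) :=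
              imageSubobject_congr' (by simp)
        _ ≤ _ := imageSubobject_comp_le _ _
    · calc W = imageSubobject W.arrow := by rw [imageSubobject_mono, Subobject.mk_arrow]
        _ = imageSubobject (biprod.inr ≫ biprod.desc V.arrow W.arrow) :=
              imageSubobject_congr' (by simp)
        _ ≤ _ := imageSubobject_comp_le _ _
  · have hV : (V ⊔ W).Factors V.arrow :=
      Subobject.factors_of_le _ le_sup_left V.factors_self
    have hW : (V ⊔ W).Factors W.arrow :=
      Subobject.factors_of_le _ le_sup_right W.factors_self
    refine imageSubobject_le _ (biprod.desc ((V ⊔ W).factorThru V.arrow hV)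
      ((V ⊔ W).factorThru W.arrow hW)) ?_
    apply biprod.hom_ext' <;> simp

theorem factors_sup_decomp (hproj : Projective X) (V W : Subobject X) (φ : X ⟶ X)
    (h : (V ⊔ W).Factors φ) :
    ∃ φ₁ φ₂ : X ⟶ X, φ = φ₁ + φ₂ ∧ V.Factors φ₁ ∧ W.Factors φ₂ := by
  rw [← imageSubobject_le_iff_factors', sup_eq_image_biprod,
    imageSubobject_le_iff_factors'] at h
  obtain ⟨ρ, hρ⟩ := lift_of_factors_image hproj _ φ h
  refine ⟨ρ ≫ biprod.fst ≫ V.arrow, ρ ≫ biprod.snd ≫ W.arrow, ?_, ?_, ?_⟩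
  · calc φ = ρ ≫ biprod.desc V.arrow W.arrow := hρ
      _ = ρ ≫ (biprod.fst ≫ biprod.inl + biprod.snd ≫ biprod.inr) ≫
            biprod.desc V.arrow W.arrow := by rw [biprod.total, Category.id_comp]
      _ = _ := by
            rw [Preadditive.add_comp, Preadditive.comp_add, Category.assoc, Category.assoc,
              biprod.inl_desc, biprod.inr_desc]
  · rw [← Category.assoc]; exact Subobject.factors_comp_arrow _
  · rw [← Category.assoc]; exact Subobject.factors_comp_arrow _

/-- `endSub U` as a right ideal of `End X`. -/
noncomputable def endIdeal (U : Subobject X) : Submodule (End X)ᵐᵒᵖ (End X) where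
  carrier := endSub U
  zero_mem' := (mem_endSub_iff_factors U 0).mpr Subobject.factors_zero
  add_mem' := fun {f g} hf hg => (mem_endSub_iff_factors U _).mpr
    (Subobject.factors_add _ _ ((mem_endSub_iff_factors U f).mp hf)
      ((mem_endSub_iff_factors U g).mp hg))
  smul_mem' := fun c f hf => (mem_endSub_iff_factors U _).mpr
    (Subobject.factors_of_factors_right _ ((mem_endSub_iff_factors U f).mp hf))

theorem mem_endIdeal_iff_factors (U : Subobject X) (φ : End X) :
    φ ∈ endIdeal U ↔ U.Factors φ :=
  mem_endSub_iff_factors U φ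

theorem endIdeal_ne_top_of_ne_top {U : Subobject X} (hU : U ≠ ⊤) : endIdeal U ≠ ⊤ := by
  intro h
  apply hU
  have h1 : (1 : End X) ∈ endIdeal U := h ▸ Submodule.mem_top
  exact eq_top_of_factors_id U ((mem_endIdeal_iff_factors U 1).mp h1)

/-- a right ideal containing `1` is everything -/
theorem submodule_eq_top_of_one_mem (J : Submodule (End X)ᵐᵒᵖ (End X))
    (h : (1 : End X) ∈ J) : J = ⊤ := by
  rw [eq_top_iff]
  intro x _
  have : x = (MulOpposite.op x) • (1 : End X) := by
    simp [MulOpposite.smul_eq_mul_unop]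
  rw [this]
  exact J.smul_mem _ h

theorem endIdeal_coatom (hproj : Projective X) {U : Subobject X} (hU : IsCoatom U) :
    IsCoatom (endIdeal U) := by
  constructor
  · exact endIdeal_ne_top_of_ne_top hU.1
  · intro J hJ
    obtain ⟨φ, hφJ, hφU⟩ := SetLike.exists_of_lt hJ
    rw [mem_endIdeal_iff_factors, ← imageSubobject_le_iff_factors'] at hφU
    have hsup : imageSubobject φ ⊔ U = ⊤ := by
      refine hU.2 _ (lt_of_le_of_ne le_sup_right ?_)
      intro h
      exact hφU (h ▸ le_sup_left)
    have hfac : (imageSubobject φ ⊔ U).Factors (𝟙 X) := hsup ▸ Subobject.top_factors _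
    obtain ⟨α, β, hαβ, hα, hβ⟩ := factors_sup_decomp hproj _ _ _ hfac
    obtain ⟨ρ, hρ⟩ := lift_of_factors_image hproj φ α hα
    apply submodule_eq_top_of_one_mem J
    have h1 : (1 : End X) = (@MulOpposite.op (End X) ρ) • φ + (show End X from β) := by
      show 𝟙 X = ρ ≫ φ + β
      rw [← hρ]; exact hαβ
    rw [h1]
    exact J.add_mem (J.smul_mem _ hφJ)
      (hJ.le ((mem_endIdeal_iff_factors U β).mpr hβ))

theorem imageSubobject_mem_S {I : Submodule (End X)ᵐᵒᵖ (End X)}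
    (hproj : Projective X) {φ : End X} (hφ : φ ∈ I) :
    endSub (imageSubobject φ) ⊆ (I : Set (End X)) := by
  intro ψ hψ
  rw [mem_endSub_iff_factors] at hψ
  obtain ⟨ρ, hρ⟩ := lift_of_factors_image hproj φ ψ hψ
  have : ψ = (@MulOpposite.op (End X) ρ) • φ := hρ
  rw [this]
  exact I.smul_mem _ hφ

end Aux

/-- Let `A` be a well-powered abelian category in which every family of subobjects of an
object has a supremum (given by `sup`), and let `X` be a finitely generated projective
object.  Then `U ↦ End(U|X)` and `a ↦ sup {V ∣ End(V|X) ⊆ a}` induce mutually inverse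
bijections between the maximal subobjects of `X` (coatoms of `Subobject X`) and the
maximal right ideals of `End X` (coatoms of the lattice of submodules of `End X` as a
right module over itself). -/
theorem maximal_subobjects_equiv_maximal_right_ideals {A : Type u} [Category.{v} A]
    [Abelian A] [WellPowered.{v} A]
    (sup : ∀ (Z : A), Set (Subobject Z) → Subobject Z)
    (hsup : ∀ (Z : A) (S : Set (Subobject Z)), IsLUB S (sup Z S))
    (X : A) (hfg : FinitelyGeneratedObj X) (hproj : Projective X) :
    ∃ e : {U : Subobject X // IsCoatom U} ≃
          {I : Submodule (End X)ᵐᵒᵖ (End X) // IsCoatom I},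
      (∀ U : {U : Subobject X // IsCoatom U},
        ((e U : Submodule (End X)ᵐᵒᵖ (End X)) : Set (End X)) = endSub (U : Subobject X)) ∧
      (∀ I : {I : Submodule (End X)ᵐᵒᵖ (End X) // IsCoatom I},
        (e.symm I : Subobject X) =
          sup X {V : Subobject X |
            endSub V ⊆ ((I : Submodule (End X)ᵐᵒᵖ (End X)) : Set (End X))}) := by
  -- the set `S I` of subobjects `V` with `endSub V ⊆ I`
  set S : Submodule (End X)ᵐᵒᵖ (End X) → Set (Subobject X) :=
    fun I => {V : Subobject X | endSub V ⊆ (I : Set (End X))} with hS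
  have hbot : ∀ I, ⊥ ∈ S I := by
    intro I φ hφ
    rw [mem_endSub_iff_factors, Subobject.bot_factors_iff_zero] at hφ
    rw [hφ]; exact I.zero_mem
  have hdir : ∀ I, DirectedOn (· ≤ ·) (S I) := by
    intro I V hV W hW
    refine ⟨V ⊔ W, ?_, le_sup_left, le_sup_right⟩
    intro φ hφ
    rw [mem_endSub_iff_factors] at hφ
    obtain ⟨φ₁, φ₂, rfl, h1, h2⟩ := factors_sup_decomp hproj V W φ hφ
    exact I.add_mem (hV ((mem_endSub_iff_factors V φ₁).mpr h1))
      (hW ((mem_endSub_iff_factors W φ₂).mpr h2))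
  have hne_top : ∀ I : Submodule (End X)ᵐᵒᵖ (End X), I ≠ ⊤ → sup X (S I) ≠ ⊤ := by
    intro I hI h
    have : (⊤ : Subobject X) ∈ S I := by
      apply hfg (S I) ⟨⊥, hbot I⟩ (hdir I)
      rw [← h]; exact hsup X (S I)
    apply hI
    apply submodule_eq_top_of_one_mem
    exact this ((mem_endSub_iff_factors ⊤ 1).mpr (Subobject.top_factors _))
  have hUle : ∀ I, ∀ V ∈ S I, V ≤ sup X (S I) := fun I V hV => (hsup X (S I)).1 hV
  -- for a coatom ideal `I`, `endIdeal (sup X (S I)) = I` and `sup X (S I)` is a coatom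
  have hmain : ∀ I : Submodule (End X)ᵐᵒᵖ (End X), IsCoatom I →
      endIdeal (sup X (S I)) = I ∧ IsCoatom (sup X (S I)) := by
    intro I hI
    set U := sup X (S I) with hU
    have hUne : U ≠ ⊤ := hne_top I hI.1
    have hIle : I ≤ endIdeal U := by
      intro φ hφ
      rw [mem_endIdeal_iff_factors, ← imageSubobject_le_iff_factors']
      exact hUle I _ (imageSubobject_mem_S hproj hφ)
    have hEq : endIdeal U = I := by
      rcases eq_or_lt_of_le hIle with h | h
      · exact h.symm
      · exact absurd (hI.2 _ h) (endIdeal_ne_top_of_ne_top hUne)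
    refine ⟨hEq, hUne, ?_⟩
    intro W hW
    have hWS : W ∉ S I := fun h => absurd (hUle I W h) (not_le_of_gt hW)
    obtain ⟨φ, hφW, hφI⟩ : ∃ φ, φ ∈ endSub W ∧ φ ∉ I := by
      by_contra h
      push_neg at h
      exact hWS fun φ hφ => by_contra fun hc => absurd (h φ hφ) (fun h' => hc h')
    have hlt : I < I ⊔ Submodule.span (End X)ᵐᵒᵖ {φ} := by
      refine lt_of_le_of_ne le_sup_left ?_
      intro h
      exact hφI (h ▸ Submodule.mem_sup_right (Submodule.mem_span_singleton_self φ))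
    have htop := hI.2 _ hlt
    have h1 : (1 : End X) ∈ I ⊔ Submodule.span (End X)ᵐᵒᵖ {φ} := htop ▸ Submodule.mem_top
    obtain ⟨y, hy, z, hz, hyz⟩ := Submodule.mem_sup.mp h1
    obtain ⟨c, rfl⟩ := Submodule.mem_span_singleton.mp hz
    apply eq_top_of_factors_id W
    have hyW : W.Factors y := by
      have : y ∈ endSub U := hIle hy
      rw [mem_endSub_iff_factors] at this
      exact Subobject.factors_of_le _ (le_of_lt hW) this
    have hzW : W.Factors (c • φ) := by
      rw [mem_endSub_iff_factors] at hφW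
      exact Subobject.factors_of_factors_right _ hφW
    have := Subobject.factors_add _ _ hyW hzW
    rwa [show y + c • φ = 𝟙 X from hyz] at this
  -- for a coatom subobject `U`, `sup X (S (endIdeal U)) = U`
  have hback : ∀ U : Subobject X, IsCoatom U → sup X (S (endIdeal U)) = U := by
    intro U hU
    have hUS : U ∈ S (endIdeal U) := fun φ hφ => hφ
    have h1 : U ≤ sup X (S (endIdeal U)) := hUle _ _ hUS
    have h2 : sup X (S (endIdeal U)) ≠ ⊤ :=
      hne_top _ (endIdeal_ne_top_of_ne_top hU.1)
    rcases eq_or_lt_of_le h1 with h | h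
    · exact h.symm
    · exact absurd (hU.2 _ h) h2
  refine ⟨{
    toFun := fun U => ⟨endIdeal U.1, endIdeal_coatom hproj U.2⟩
    invFun := fun I => ⟨sup X (S I.1), (hmain I.1 I.2).2⟩
    left_inv := fun U => Subtype.ext (hback U.1 U.2)
    right_inv := fun I => Subtype.ext (hmain I.1 I.2).1 }, fun U => rfl, fun I => rfl⟩
end

section
/- Let A be a well-powered abelian category in which every family of subobjects of an object has a supremum. Let φ : X → Y be a morphism in A and suppose Y is finitely generated and projective. Then the image of φ is contained in rad Y if and only if φ ∈ Rad_A(X,Y), i.e., if and only if φ∘ψ lies in the Jacobson radical J(End_A(Y)) for every morphism ψ : Y → X. -/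
open CategoryTheory CategoryTheory.Limits

universe v u

/-- The Jacobson radical of a ring: the intersection of all maximal right ideals
(coatoms of the lattice of submodules of `R` as a right module over itself). -/
def jacobsonRadical (R : Type*) [Ring R] : Set R :=
  {x : R | ∀ I : Submodule Rᵐᵒᵖ R, IsCoatom I → x ∈ I}

section Aux

set_option linter.unusedSectionVars false

variable {A : Type u} [Category.{v} A] [Abelian A] [WellPowered.{v} A]

/-- If a subobject factors the identity, it is the whole object. -/
lemma factors_id_eq_top {Y : A} (M : Subobject Y) (h : M.Factors (𝟙 Y)) : M = ⊤ := by
  have : IsSplitEpi M.arrow := IsSplitEpi.mk' ⟨M.factorThru (𝟙 Y) h, M.factorThru_arrow _ _⟩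
  have : IsIso M.arrow := isIso_of_mono_of_isSplitEpi M.arrow
  exact (Subobject.isIso_arrow_iff_eq_top M).mp this

lemma factors_of_imageSubobject_le {X Y : A} {M : Subobject Y} (f : X ⟶ Y)
    (h : imageSubobject f ≤ M) : M.Factors f := by
  have h1 : (imageSubobject f).Factors f := by
    have := Subobject.factors_comp_arrow (factorThruImageSubobject f)
    rwa [imageSubobject_arrow_comp] at this
  exact Subobject.factors_of_le f h h1

/-- Coatomicity of the subobject lattice of a finitely generated object,
given arbitrary suprema of subobjects. -/
lemma exists_coatom_le_of_fg
    (hsup : ∀ (Z : A) (S : Set (Subobject Z)), ∃ U : Subobject Z, IsLUB S U)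
    {Y : A} (hfg : FinitelyGeneratedObj Y) {N : Subobject Y} (hN : N ≠ ⊤) :
    ∃ M : Subobject Y, IsCoatom M ∧ N ≤ M := by
  obtain ⟨m, hNm, hm⟩ := zorn_le_nonempty₀ {P : Subobject Y | P ≠ ⊤}
    (fun c hcs hc y hy => by
      obtain ⟨U, hU⟩ := hsup Y c
      refine ⟨U, ?_, fun z hz => hU.1 hz⟩
      intro hUt
      subst hUt
      exact hcs (hfg c ⟨y, hy⟩ hc.directedOn hU) rfl) N hN
  refine ⟨m, ⟨hm.prop, fun b hb => ?_⟩, hNm⟩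
  by_contra hbt
  exact hb.not_ge (hm.2 hbt hb.le)

/-- The set of endomorphisms factoring through a subobject `M`, as a right ideal of `End Y`. -/
def factorsIdeal {Y : A} (M : Subobject Y) : Submodule (End Y)ᵐᵒᵖ (End Y) where
  carrier := {f : End Y | M.Factors f}
  add_mem' := fun hf hg => Subobject.factors_add _ _ hf hg
  zero_mem' := Subobject.factors_zero
  smul_mem' := by
    intro c f hf
    show M.Factors (c • f)
    rw [MulOpposite.smul_eq_mul_unop, End.mul_def]
    exact Subobject.factors_of_factors_right _ hf

lemma right_ideal_eq_top_of_one_mem {R : Type*} [Ring R] {I : Submodule Rᵐᵒᵖ R}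
    (h : (1 : R) ∈ I) : I = ⊤ := by
  refine Submodule.eq_top_iff'.mpr fun y => ?_
  have := I.smul_mem (MulOpposite.op y) h
  rwa [MulOpposite.smul_eq_mul_unop, MulOpposite.unop_op, one_mul] at this

lemma right_ideals_coatomic (R : Type*) [Ring R] : IsCoatomic (Submodule Rᵐᵒᵖ R) := by
  apply CompleteLattice.coatomic_of_top_compact
  have : Submodule.span Rᵐᵒᵖ ({1} : Set R) = ⊤ := by
    refine Submodule.eq_top_iff'.mpr fun y => ?_
    exact Submodule.mem_span_singleton.mpr
      ⟨MulOpposite.op y, by rw [MulOpposite.smul_eq_mul_unop, MulOpposite.unop_op, one_mul]⟩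
  rw [← this]
  exact Submodule.singleton_span_isCompactElement 1

end Aux

/-- Let `A` be a well-powered abelian category in which every family of subobjects of an
object has a supremum, let `φ : X ⟶ Y` be a morphism with `Y` finitely generated and
projective.  Then the image of `φ` is contained in `rad Y` (i.e. in every maximal
subobject of `Y`) if and only if `φ ∈ Rad_A(X,Y)`, that is, `ψ ≫ φ` lies in the
Jacobson radical of `End Y` for every `ψ : Y ⟶ X`. -/
theorem image_le_radical_iff_mem_catRadical {A : Type u} [Category.{v} A] [Abelian A]
    [WellPowered.{v} A]
    (hsup : ∀ (Z : A) (S : Set (Subobject Z)), ∃ U : Subobject Z, IsLUB S U)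
    {X Y : A} (φ : X ⟶ Y) (hfg : FinitelyGeneratedObj Y) (hproj : Projective Y) :
    (∀ M : Subobject Y, IsCoatom M → imageSubobject φ ≤ M) ↔
      ∀ ψ : Y ⟶ X, (ψ ≫ φ) ∈ jacobsonRadical (End Y) := by
  constructor
  · -- image in radical → φ in categorical radical
    intro h ψ I hI
    by_contra hx
    set x : End Y := ψ ≫ φ with hxdef
    -- `I ⊔ span {x} = ⊤` since `I` is a coatom and `x ∉ I`
    have hsup' : I ⊔ Submodule.span (End Y)ᵐᵒᵖ {x} = ⊤ := by
      refine hI.2 _ (lt_of_le_of_ne le_sup_left ?_)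
      intro hEq
      exact hx (hEq ▸ (le_sup_right : _ ≤ I ⊔ _) (Submodule.mem_span_singleton_self x))
    have h1 : (1 : End Y) ∈ I ⊔ Submodule.span (End Y)ᵐᵒᵖ {x} := by
      rw [hsup']; trivial
    obtain ⟨i, hiI, s, hs, hisum⟩ := Submodule.mem_sup.mp h1
    obtain ⟨a, rfl⟩ := Submodule.mem_span_singleton.mp hs
    -- as morphisms: i + a.unop ≫ x = 𝟙 Y
    have hmor : (show Y ⟶ Y from i) + MulOpposite.unop a ≫ (ψ ≫ φ) = 𝟙 Y := hisum
    -- `i` is an epimorphism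
    have hepi : Epi (show Y ⟶ Y from i) := by
      rw [Preadditive.epi_iff_cancel_zero]
      intro Z g hg
      have hKtop : kernelSubobject g = ⊤ := by
        by_contra hKt
        obtain ⟨M, hM, hKM⟩ := exists_coatom_le_of_fg hsup hfg hKt
        have hfi : M.Factors (show Y ⟶ Y from i) :=
          Subobject.factors_of_le _ hKM (kernelSubobject_factors g i hg)
        have hfx : M.Factors (MulOpposite.unop a ≫ (ψ ≫ φ)) := by
          apply factors_of_imageSubobject_le
          have he : MulOpposite.unop a ≫ (ψ ≫ φ) = (MulOpposite.unop a ≫ ψ) ≫ φ := by simp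
          rw [he]
          exact le_trans (imageSubobject_comp_le _ φ) (h M hM)
        have hfid : M.Factors (𝟙 Y) := by
          rw [← hmor]
          exact Subobject.factors_add _ _ hfi hfx
        exact hM.1 (factors_id_eq_top M hfid)
      have : IsIso (kernelSubobject g).arrow :=
        (Subobject.isIso_arrow_iff_eq_top _).mpr hKtop
      rw [← cancel_epi (kernelSubobject g).arrow, kernelSubobject_arrow_comp, comp_zero]
    -- lift the identity through `i` using projectivity
    haveI := hepi
    have hsec := Projective.factorThru_comp (𝟙 Y) (show Y ⟶ Y from i)
    have hone : (1 : End Y) ∈ I := by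
      have := I.smul_mem (MulOpposite.op (Projective.factorThru (𝟙 Y) (show Y ⟶ Y from i))) hiI
      rwa [MulOpposite.smul_eq_mul_unop, MulOpposite.unop_op, End.mul_def, hsec] at this
    exact hI.1 (right_ideal_eq_top_of_one_mem hone)
  · -- φ in categorical radical → image in radical
    intro h M hM
    by_contra hle
    set e : (M : A) ⊞ X ⟶ Y := biprod.desc M.arrow φ with he
    haveI hepi : Epi e := by
      rw [Preadditive.epi_iff_cancel_zero]
      intro Z g hg
      have h1 : M.arrow ≫ g = 0 := by
        rw [← biprod.inl_desc M.arrow φ, ← he, Category.assoc, hg, comp_zero]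
      have h2 : φ ≫ g = 0 := by
        rw [← biprod.inr_desc M.arrow φ, ← he, Category.assoc, hg, comp_zero]
      have hMK : M ≤ kernelSubobject g := by
        refine Subobject.le_of_comm
          ((kernelSubobject g).factorThru M.arrow (kernelSubobject_factors g M.arrow h1)) ?_
        simp
      rcases lt_or_eq_of_le hMK with hlt | heq
      · have hKtop : kernelSubobject g = ⊤ := hM.2 _ hlt
        have : IsIso (kernelSubobject g).arrow :=
          (Subobject.isIso_arrow_iff_eq_top _).mpr hKtop
        rw [← cancel_epi (kernelSubobject g).arrow, kernelSubobject_arrow_comp, comp_zero]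
      · exfalso
        have hfφ : M.Factors φ := by
          rw [heq]
          exact kernelSubobject_factors g φ h2
        exact hle (imageSubobject_le φ (M.factorThru φ hfφ) (M.factorThru_arrow _ _))
    -- lift the identity through `e`
    set t : Y ⟶ (M : A) ⊞ X := Projective.factorThru (𝟙 Y) e with ht
    have hte : t ≫ e = 𝟙 Y := Projective.factorThru_comp (𝟙 Y) e
    set a : Y ⟶ (M : A) := t ≫ biprod.fst with ha
    set ψ : Y ⟶ X := t ≫ biprod.snd with hψ
    have key : a ≫ M.arrow + ψ ≫ φ = 𝟙 Y := by
      rw [← hte, he, biprod.desc_eq, ha, hψ]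
      simp [Preadditive.comp_add]
    -- the right ideal of endomorphisms factoring through `M`
    have hIne : factorsIdeal M ≠ ⊤ := by
      intro hEq
      have hmem : (show End Y from 𝟙 Y) ∈ factorsIdeal M := hEq ▸ Submodule.mem_top
      exact hM.1 (factors_id_eq_top M hmem)
    obtain ⟨I', hI', hII'⟩ :=
      ((right_ideals_coatomic (End Y)).eq_top_or_exists_le_coatom (factorsIdeal M)).resolve_left
        hIne
    have hxI' : (show End Y from ψ ≫ φ) ∈ I' := h ψ I' hI'
    have haI' : (show End Y from a ≫ M.arrow) ∈ I' := hII' (Subobject.factors_comp_arrow a)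
    have hone : (1 : End Y) ∈ I' := by
      rw [show (1 : End Y) = a ≫ M.arrow + ψ ≫ φ from key.symm]
      exact I'.add_mem haI' hxI'
    exact hI'.1 (right_ideal_eq_top_of_one_mem hone)
end

section
/- Let X be an object of a Krull-Schmidt category and suppose there are two direct sum decompositions X_1 ⊕ … ⊕ X_n = X = X' ⊕ X'' such that each X_i is indecomposable. Then there exists an integer t ≤ n and a reindexing of the X_i such that X = X_1 ⊕ … ⊕ X_t ⊕ X'; equivalently, there is a subset I of {1, …, n} with X ≅ (⨁_{i ∈ I} X_i) ⊕ X', the summand ⨁_{i ∈ I} X_i being isomorphic to X''. -/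
open CategoryTheory CategoryTheory.Limits

attribute [local instance] CategoryTheory.Limits.hasBinaryBiproducts_of_finite_biproducts

universe v u

/-- An additive category is a *Krull-Schmidt category* if every object decomposes into a
finite direct sum of objects having local endomorphism rings. -/
def IsKrullSchmidtCategory (A : Type u) [Category.{v} A] [Preadditive A]
    [HasFiniteBiproducts A] : Prop :=
  ∀ X : A, ∃ (n : ℕ) (f : Fin n → A),
    Nonempty (X ≅ ⨁ f) ∧ ∀ i, IsLocalRing (End (f i))

/-!
Every indecomposable `Xᵢ` has a local endomorphism ring (it is one of the local summands the
Krull–Schmidt property provides), and so does every summand `Yⱼ` of a Krull–Schmidt decomposition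
of `X''`. If a local `Z` is a summand of `⨁ Xᵢ`, the components of `𝟙 Z` through the `Xᵢ` sum to
`1` in the local ring `End Z`, so one of them is a unit; the resulting split mono `Z ⟶ Xᵢ` is an
isomorphism because the only idempotents of the local ring `End Xᵢ` are `0` and `1`. A local summand
cancels from biproducts (`Z ⊞ C ≅ Z ⊞ D → C ≅ D`) by Gaussian elimination. Induct on the `Yⱼ`:
match `Yⱼ` with some `Xᵢ`, cancel it from `⨁ Xᵢ ≅ X' ⊞ ⨁ Yⱼ`, and recurse.
-/

theorem IsLocalRing.eq_zero_or_one_of_isIdempotentElem {R : Type*} [Ring R] [IsLocalRing R]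
    {e : R} (he : IsIdempotentElem e) : e = 0 ∨ e = 1 := by
  rcases IsLocalRing.isUnit_or_isUnit_of_add_one (add_sub_cancel e 1) with h | h
  · exact Or.inr ((IsIdempotentElem.iff_eq_one_of_isUnit h).mp he)
  · exact Or.inl (sub_eq_self.mp ((IsIdempotentElem.iff_eq_one_of_isUnit h).mp he.one_sub))

namespace CategoryTheory

variable {A : Type u} [Category.{v} A] [Preadditive A]

theorem Iso.isLocalRing_end {X Y : A} (α : X ≅ Y) [IsLocalRing (End X)] :
    IsLocalRing (End Y) :=
  (MulEquiv.toRingEquiv α.symm.conj fun f g => by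
    simp only [Iso.conj_apply, Iso.symm_hom, Iso.symm_inv]
    rw [Preadditive.add_comp, Preadditive.comp_add] :
    End Y →+* End X).domain_isLocalRing

theorem not_isZero_of_nontrivial_end {X : A} [Nontrivial (End X)] : ¬IsZero X :=
  fun h => one_ne_zero (α := End X) (h.eq_of_src _ _)

theorem isIso_of_isUnit_comp {Y Z : A} [IsLocalRing (End Y)] [Nontrivial (End Z)]
    (f : Z ⟶ Y) (g : Y ⟶ Z) (h : IsUnit (End.of (f ≫ g))) : IsIso f := by
  obtain ⟨v, hv⟩ := h.exists_left_inv
  have hfg : f ≫ g ≫ v = 𝟙 Z := by simpa [End.mul_def] using hv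
  have he : IsIdempotentElem (End.of ((g ≫ v) ≫ f)) := by
    change ((g ≫ v) ≫ f) ≫ (g ≫ v) ≫ f = (g ≫ v) ≫ f
    simp only [Category.assoc, reassoc_of% hfg]
  rcases IsLocalRing.eq_zero_or_one_of_isIdempotentElem he with h0 | h1
  · refine absurd ((IsZero.iff_id_eq_zero Z).mpr ?_) not_isZero_of_nontrivial_end
    calc 𝟙 Z = (f ≫ g ≫ v) ≫ f ≫ g ≫ v := by rw [hfg, Category.comp_id]
      _ = f ≫ ((g ≫ v) ≫ f) ≫ g ≫ v := by simp only [Category.assoc]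
      _ = 0 := by rw [show (g ≫ v) ≫ f = 0 from h0]; simp
  · exact ⟨g ≫ v, hfg, h1⟩

theorem biproduct.exists_isIso_comp_π {ι : Type} [Fintype ι] {Xs : ι → A} [HasBiproduct Xs]
    [∀ i, IsLocalRing (End (Xs i))] {Z : A} [IsLocalRing (End Z)]
    (s : Z ⟶ ⨁ Xs) (r : ⨁ Xs ⟶ Z) (hsr : s ≫ r = 𝟙 Z) :
    ∃ i, IsIso (s ≫ biproduct.π Xs i) := by
  have hsum : ∑ i, End.of ((s ≫ biproduct.π Xs i) ≫ biproduct.ι Xs i ≫ r) = 1 := by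
    calc ∑ i, (s ≫ biproduct.π Xs i) ≫ biproduct.ι Xs i ≫ r
        = s ≫ (∑ i, biproduct.π Xs i ≫ biproduct.ι Xs i) ≫ r := by
          simp only [Preadditive.sum_comp, Preadditive.comp_sum, Category.assoc]
      _ = 𝟙 Z := by rw [biproduct.total, Category.id_comp, hsr]
  obtain ⟨i, -, hi⟩ := IsLocalRing.exists_of_isUnit_sum (hsum ▸ isUnit_one)
  exact ⟨i, isIso_of_isUnit_comp _ _ hi⟩

theorem Biprod.nonempty_iso_of_isLocalRing_end [HasBinaryBiproducts A] {Z C D : A}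
    [IsLocalRing (End Z)] (φ : Z ⊞ C ≅ Z ⊞ D) : Nonempty (C ≅ D) := by
  set a := biprod.inl ≫ φ.hom ≫ biprod.fst
  set c := biprod.inl ≫ φ.hom ≫ biprod.snd
  set b := biprod.inr ≫ φ.inv ≫ biprod.fst
  have hsum : End.of (a ≫ biprod.inl ≫ φ.inv ≫ biprod.fst) + End.of (c ≫ b) = 1 := by
    change a ≫ biprod.inl ≫ φ.inv ≫ biprod.fst + c ≫ b = 𝟙 Z
    calc _ = biprod.inl ≫ φ.hom ≫ (biprod.fst ≫ biprod.inl + biprod.snd ≫ biprod.inr) ≫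
          φ.inv ≫ biprod.fst := by
            simp only [a, c, b, Preadditive.add_comp, Preadditive.comp_add, Category.assoc]
      _ = 𝟙 Z := by simp
  rcases IsLocalRing.isUnit_or_isUnit_of_add_one hsum with ha | hc
  · have := isIso_of_isUnit_comp _ _ ha
    exact ⟨Biprod.isoElim φ⟩
  · obtain ⟨w, hw⟩ := hc.exists_left_inv
    have hcb : c ≫ b ≫ w = 𝟙 Z := by simpa [End.mul_def] using hw
    -- a shear of `Z ⊞ D` turns the `Z ⟶ Z` entry `a` into `a + c ≫ b ≫ w ≫ (𝟙 Z - a) = 𝟙 Z`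
    let ψ := φ ≪≫ Biprod.unipotentLower (b ≫ w ≫ (𝟙 Z - a))
    have hψ : biprod.inl ≫ ψ.hom ≫ biprod.fst = 𝟙 Z := by
      calc _ = a + c ≫ b ≫ w ≫ (𝟙 Z - a) := by simp [ψ, a, c]
        _ = 𝟙 Z := by rw [reassoc_of% hcb]; abel
    have : IsIso (biprod.inl ≫ ψ.hom ≫ biprod.fst) := by rw [hψ]; infer_instance
    exact ⟨Biprod.isoElim ψ⟩

variable [HasFiniteBiproducts A]

theorem biproduct.isZero_of_isEmpty {ι : Type} [Finite ι] [IsEmpty ι] (f : ι → A) :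
    IsZero (⨁ f) := by
  rw [IsZero.iff_id_eq_zero]
  ext i
  exact isEmptyElim i

noncomputable def biproduct.isoBiprodSubtypeNe {ι : Type} [Finite ι] [DecidableEq ι]
    (f : ι → A) (i : ι) : ⨁ f ≅ f i ⊞ ⨁ Subtype.restrict (· ≠ i) f :=
  biprod.uniqueUpToIso _ _ <| isBinaryBilimitOfTotal
    { pt := ⨁ f
      fst := biproduct.π f i
      snd := biproduct.toSubtype f _
      inl := biproduct.ι f i
      inr := biproduct.fromSubtype f _
      inl_snd := by simp [biproduct.ι_toSubtype]
      inr_fst := by simp [biproduct.fromSubtype_π] }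
    (by
      ext j k
      by_cases hj : j = i
      · subst hj; simp
      · simp [hj, biproduct.ι_π_ne _ (Ne.symm hj)])

noncomputable def biproduct.finsetUnivIso {ι : Type} [Fintype ι] (f : ι → A) :
    (⨁ fun i : (Finset.univ : Finset ι) => f i) ≅ ⨁ f :=
  biproduct.whiskerEquiv (Equiv.subtypeUnivEquiv Finset.mem_univ) fun _ => Iso.refl _

def Finset.subtypeNeEquivOfEqErase {ι : Type} [DecidableEq ι] {s t : Finset ι} {i : ι}
    (hi : i ∈ s) (ht : t = s.erase i) : {j : s // j ≠ ⟨i, hi⟩} ≃ t where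
  toFun j := ⟨j.1, by simpa [ht] using fun h => j.2 (Subtype.ext h)⟩
  invFun j :=
    have hj : (j : ι) ∈ s.erase i := ht ▸ j.2
    ⟨⟨j, Finset.mem_of_mem_erase hj⟩, fun h => Finset.ne_of_mem_erase hj (congrArg Subtype.val h)⟩

noncomputable def biproduct.finsetIsoBiprodErase {ι : Type} [DecidableEq ι] (f : ι → A)
    {s t : Finset ι} {i : ι} (hi : i ∈ s) (ht : t = s.erase i) :
    (⨁ fun j : s => f j) ≅ f i ⊞ ⨁ fun j : t => f j :=
  biproduct.isoBiprodSubtypeNe (fun j : s => f j) ⟨i, hi⟩ ≪≫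
    biprod.mapIso (Iso.refl _)
      (biproduct.whiskerEquiv (g := fun j : t => f j) (Finset.subtypeNeEquivOfEqErase hi ht)
        fun _ => Iso.refl _)

theorem isLocalRing_end_of_indecomposable (hKS : IsKrullSchmidtCategory A) {X : A}
    (hX : Indecomposable X) : IsLocalRing (End X) := by
  obtain ⟨n, f, ⟨α⟩, hf⟩ := hKS X
  rcases isEmpty_or_nonempty (Fin n) with _ | ⟨⟨i⟩⟩
  · exact absurd ((biproduct.isZero_of_isEmpty f).of_iso α) hX.1
  have := hf i
  rcases hX.2 _ _ (α ≪≫ biproduct.isoBiprodSubtypeNe f i) with h | h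
  · exact absurd h not_isZero_of_nontrivial_end
  · exact (isoBiprodZero h ≪≫ (biproduct.isoBiprodSubtypeNe f i).symm ≪≫ α.symm).isLocalRing_end

theorem biproduct.exists_subset_exchange {ι κ : Type} [DecidableEq ι] [DecidableEq κ]
    (Xs : ι → A) [∀ i, IsLocalRing (End (Xs i))] (Ys : κ → A) [∀ j, IsLocalRing (End (Ys j))]
    (X' : A) (t : Finset κ) (s : Finset ι)
    (φ : (⨁ fun i : s => Xs i) ≅ X' ⊞ ⨁ fun j : t => Ys j) :
    ∃ I ⊆ s, Nonempty ((⨁ fun i : I => Xs i) ⊞ X' ≅ ⨁ fun i : s => Xs i) ∧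
      Nonempty ((⨁ fun i : I => Xs i) ≅ ⨁ fun j : t => Ys j) := by
  induction t using Finset.strongInduction generalizing s with | H t ih => ?_
  rcases t.eq_empty_or_nonempty with rfl | ⟨j, hj⟩
  · have hXs := biproduct.isZero_of_isEmpty fun i : (∅ : Finset ι) => Xs i
    have hYs := biproduct.isZero_of_isEmpty fun j : (∅ : Finset κ) => Ys j
    exact ⟨∅, Finset.empty_subset s,
      ⟨biprod.braiding _ _ ≪≫ biprod.mapIso (Iso.refl X') (hXs.iso hYs) ≪≫ φ.symm⟩,
      ⟨hXs.iso hYs⟩⟩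
  let σ := biproduct.finsetIsoBiprodErase Ys hj rfl
  let γ : (⨁ fun i : s => Xs i) ≅ Ys j ⊞ (X' ⊞ ⨁ fun k : t.erase j => Ys k) :=
    φ ≪≫ biprod.mapIso (Iso.refl X') σ ≪≫ (biprod.associator _ _ _).symm ≪≫
      biprod.mapIso (biprod.braiding _ _) (Iso.refl _) ≪≫ biprod.associator _ _ _
  obtain ⟨⟨i, hi⟩, _⟩ :=
    biproduct.exists_isIso_comp_π (biprod.inl ≫ γ.inv) (γ.hom ≫ biprod.fst) (by simp)
  let e : Ys j ≅ Xs i := asIso ((biprod.inl ≫ γ.inv) ≫ biproduct.π (fun i : s => Xs i) ⟨i, hi⟩)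
  let δ := biproduct.finsetIsoBiprodErase Xs hi rfl
  obtain ⟨ν⟩ :=
    Biprod.nonempty_iso_of_isLocalRing_end (δ.symm ≪≫ γ ≪≫ biprod.mapIso e (Iso.refl _))
  obtain ⟨I, hIs, ⟨α⟩, ⟨β⟩⟩ := ih _ (Finset.erase_ssubset hj) _ ν
  have hiI : i ∉ I := fun h => Finset.notMem_erase i s (hIs h)
  let θ := biproduct.finsetIsoBiprodErase Xs (Finset.mem_insert_self i I)
    (Finset.erase_insert hiI).symm
  refine ⟨insert i I, Finset.insert_subset hi (hIs.trans (Finset.erase_subset i s)), ⟨?_⟩, ⟨?_⟩⟩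
  · exact biprod.mapIso θ (Iso.refl X') ≪≫ biprod.associator _ _ _ ≪≫
      biprod.mapIso (Iso.refl _) α ≪≫ δ.symm
  · exact θ ≪≫ biprod.mapIso e.symm β ≪≫ σ.symm

end CategoryTheory

/-- Exchange property: let `X` be an object of a Krull-Schmidt category with two
decompositions `X₁ ⊕ … ⊕ X_n = X = X' ⊕ X''` where each `X_i` is indecomposable.  Then
there is a subset `I` of the indices (after reindexing, `I = {1, …, t}` for some
`t ≤ n`) with `X ≅ (⨁_{i ∈ I} X_i) ⊕ X'`, the summand `⨁_{i ∈ I} X_i` being isomorphic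
to `X''`. -/
theorem krullSchmidt_exchange {A : Type u} [Category.{v} A] [Preadditive A]
    [HasFiniteBiproducts A] (hKS : IsKrullSchmidtCategory A)
    (X X' X'' : A) {n : ℕ} (Xs : Fin n → A)
    (h : Nonempty (X ≅ ⨁ Xs)) (h' : Nonempty (X ≅ X' ⊞ X''))
    (hind : ∀ i, Indecomposable (Xs i)) :
    ∃ I : Finset (Fin n),
      Nonempty (((⨁ fun i : I => Xs i) ⊞ X') ≅ X) ∧
      Nonempty ((⨁ fun i : I => Xs i) ≅ X'') := by
  obtain ⟨α⟩ := h
  obtain ⟨β⟩ := h'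
  obtain ⟨m, Ys, ⟨ψ⟩, hYs⟩ := hKS X''
  have := fun i => isLocalRing_end_of_indecomposable hKS (hind i)
  obtain ⟨I, -, ⟨α'⟩, ⟨β'⟩⟩ := biproduct.exists_subset_exchange Xs Ys X' Finset.univ Finset.univ
    (biproduct.finsetUnivIso Xs ≪≫ α.symm ≪≫ β ≪≫
      biprod.mapIso (Iso.refl X') (ψ ≪≫ (biproduct.finsetUnivIso Ys).symm))
  exact ⟨I, ⟨α' ≪≫ biproduct.finsetUnivIso Xs ≪≫ α.symm⟩,
    ⟨β' ≪≫ biproduct.finsetUnivIso Ys ≪≫ ψ.symm⟩⟩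
end

section
/- An additive category A is a Krull-Schmidt category if and only if A has split idempotents and the endomorphism ring of every object of A is semi-perfect. -/
open CategoryTheory CategoryTheory.Limits

universe v u

/-- A ring `Γ` is *semi-perfect* if the right `Γ`-module `Γ` admits a decomposition
`Γ = P₁ ⊕ … ⊕ P_r` into submodules such that each `P_i` has a local endomorphism
ring. -/
def IsSemiperfectRing (Γ : Type*) [Ring Γ] : Prop :=
  ∃ (r : ℕ) (P : Fin r → Submodule Γᵐᵒᵖ Γ), DirectSum.IsInternal P ∧
    ∀ i, IsLocalRing (Module.End Γᵐᵒᵖ (P i))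


/-!
Write `Γ = End X`; recall that `f * g = g ≫ f` in `Γ`, so the right ideal `eΓ` is
`{u | u ≫ e = u}`. A biproduct decomposition of `X` with summands `Yⱼ` is the same as a complete
family of orthogonal idempotents `eⱼ = πⱼ ≫ ιⱼ` of `Γ`, i.e. a decomposition
`Γ = e₁Γ ⊕ ⋯ ⊕ eₙΓ` into right ideals, and `End Yⱼ ≅ End_Γ (eⱼΓ)`. So a Krull-Schmidt
decomposition of `X` shows that `Γ` is semi-perfect, and conversely a decomposition witnessing
semi-perfectness becomes a Krull-Schmidt decomposition of `X` as soon as the `eⱼ` split.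

It remains to split the idempotents `e` of `X = Y ⊕ Z` (inclusions `iₖ`, projections `pₖ`) when
`End Y` is local and all idempotents of `Z` split; induction on the number of summands then gives
idempotent completeness.
Let `a = i₁ ≫ e ≫ p₁ ∈ End Y`. If `1 - a` is invertible then so is `1 - p₁ ≫ i₁ ≫ e`, and
`e = (e ≫ p₂) ≫ t` for some `t : Z ⟶ X`, so `e` splits together with the idempotent `t ≫ e ≫ p₂`
of `Z`. If `a` is invertible, `Y` is a retract of the image of `e`; the complementary idempotent
`e - e ≫ p₁ ≫ a⁻¹ ≫ i₁ ≫ e` has vanishing `Y`-corner and falls under the first case.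
-/

section RightIdeals

theorem IsLocalRing.of_ringEquiv {R S : Type*} [Semiring R] [Semiring S] [IsLocalRing R]
    (φ : R ≃+* S) : IsLocalRing S :=
  have := φ.symm.toEquiv.nontrivial
  .of_isUnit_or_isUnit_of_isUnit_add fun a b hab => by
    simpa using (isUnit_or_isUnit_of_isUnit_add (a := φ.symm a) (b := φ.symm b)
      (by simpa using hab.map φ.symm)).imp (·.map φ) (·.map φ)

theorem DirectSum.coeLinearMap_eq_sum {R ι M : Type*} [Semiring R] [Fintype ι] [DecidableEq ι]
    [AddCommMonoid M] [Module R M] (P : ι → Submodule R M) (z : DirectSum ι fun j => P j) :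
    coeLinearMap P z = ∑ j, (z j : M) := by
  conv_lhs => rw [← DirectSum.sum_univ_of z]
  simp only [map_sum, coeLinearMap_of]

variable {R : Type*} [Semiring R]

theorem IsIdempotentElem.mem_span_op_singleton_iff {e : R} (he : IsIdempotentElem e) {x : R} :
    x ∈ Submodule.span Rᵐᵒᵖ {e} ↔ e * x = x := by
  rw [Submodule.mem_span_singleton]
  constructor
  · rintro ⟨a, rfl⟩
    simp [MulOpposite.smul_eq_mul_unop, ← mul_assoc, he.eq]
  · exact fun h => ⟨.op x, by simpa [MulOpposite.smul_eq_mul_unop] using h⟩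

theorem IsIdempotentElem.apply_eq_mul {e : R} (he : IsIdempotentElem e)
    (T : Module.End Rᵐᵒᵖ (Submodule.span Rᵐᵒᵖ {e})) (u : Submodule.span Rᵐᵒᵖ {e}) :
    (T u : R) = T ⟨e, Submodule.mem_span_singleton_self e⟩ * u := by
  have hu : u = MulOpposite.op (u : R) • ⟨e, Submodule.mem_span_singleton_self e⟩ :=
    Subtype.ext (he.mem_span_op_singleton_iff.1 u.2).symm
  conv_lhs => rw [hu, map_smul]
  rfl

variable {ι : Type*} [Fintype ι] [DecidableEq ι]

theorem DirectSum.IsInternal.exists_completeOrthogonalIdempotents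
    {P : ι → Submodule Rᵐᵒᵖ R} (h : DirectSum.IsInternal P) :
    ∃ e : ι → R, CompleteOrthogonalIdempotents e ∧ ∀ j, P j = Submodule.span Rᵐᵒᵖ {e j} := by
  set σ := (LinearEquiv.ofBijective (coeLinearMap P) h).symm
  have hσ (x : R) (k : ι) : (σ x k : R) = (σ 1 k : R) * x := by
    conv_lhs => rw [← one_mul x, ← op_smul_eq_mul, map_smul]
    rfl
  have hmul_of_mem {j : ι} {x : R} (hx : x ∈ P j) (k : ι) :
      (σ 1 k : R) * x = if k = j then x else 0 := by
    rw [← hσ]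
    split_ifs with hkj
    · subst hkj; simp [σ, h.ofBijective_coeLinearMap_of_mem hx]
    · simp [σ, h.ofBijective_coeLinearMap_of_mem_ne (Ne.symm hkj) hx]
  have hidem (j : ι) : IsIdempotentElem (σ 1 j : R) := by
    simpa [IsIdempotentElem] using hmul_of_mem (σ 1 j).2 j
  refine ⟨fun j => σ 1 j, ⟨⟨hidem, fun k j hkj => ?_⟩, ?_⟩, fun j => ?_⟩
  · simpa [hkj] using hmul_of_mem (σ 1 j).2 k
  · rw [← DirectSum.coeLinearMap_eq_sum]
    exact (LinearEquiv.ofBijective (coeLinearMap P) h).apply_symm_apply 1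
  · refine le_antisymm (fun x hx => ?_) ((Submodule.span_singleton_le_iff_mem _ _).2 (σ 1 j).2)
    exact (hidem j).mem_span_op_singleton_iff.2 (by simpa using hmul_of_mem hx j)

theorem CompleteOrthogonalIdempotents.isInternal_span {R : Type*} [Ring R] {e : ι → R}
    (he : CompleteOrthogonalIdempotents e) :
    DirectSum.IsInternal fun j => Submodule.span Rᵐᵒᵖ {e j} := by
  have hmem (j : ι) (x : R) : e j * x ∈ Submodule.span Rᵐᵒᵖ {e j} :=
    (he.idem j).mem_span_op_singleton_iff.2 (by rw [← mul_assoc, (he.idem j).eq])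
  change Function.Bijective (DirectSum.coeLinearMap _)
  constructor
  · rw [injective_iff_map_eq_zero]
    intro z hz
    ext k
    have hz' : e k * (∑ j, (z j : R)) = 0 := by rw [← DirectSum.coeLinearMap_eq_sum, hz, mul_zero]
    rw [Finset.mul_sum, Finset.sum_eq_single k] at hz'
    · simpa [(he.idem k).mem_span_op_singleton_iff.1 (z k).2] using hz'
    · intro j _ hjk
      rw [← (he.idem j).mem_span_op_singleton_iff.1 (z j).2, ← mul_assoc, he.ortho hjk.symm,
        zero_mul]
    · simp
  · intro x
    refine ⟨∑ j, DirectSum.of _ j ⟨e j * x, hmem j x⟩, ?_⟩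
    simp [← Finset.sum_mul, he.complete]

end RightIdeals

namespace CategoryTheory

section Splitting

variable {C : Type*} [Category C]

def IdempotentSplits {X : C} (e : X ⟶ X) : Prop :=
  ∃ (Y : C) (i : Y ⟶ X) (p : X ⟶ Y), i ≫ p = 𝟙 Y ∧ p ≫ i = e

theorem IdempotentSplits.of_comp_eq {X X' : C} {e : X ⟶ X} (he : e ≫ e = e) (s : X ⟶ X')
    (t : X' ⟶ X) (hst : s ≫ t = e) (h : IdempotentSplits (t ≫ s)) : IdempotentSplits e := by
  obtain ⟨W, j, r, hjr, hrj⟩ := h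
  refine ⟨W, j ≫ t, s ≫ r, ?_, ?_⟩
  · calc (j ≫ t) ≫ s ≫ r = j ≫ (t ≫ s) ≫ r := by simp only [Category.assoc]
      _ = 𝟙 W := by rw [← hrj]; simp [hjr]
  · calc (s ≫ r) ≫ j ≫ t = s ≫ (r ≫ j) ≫ t := by simp only [Category.assoc]
      _ = e := by rw [hrj]; simp [reassoc_of% hst, hst, he]

variable [Preadditive C]

theorem isIso_id_sub_comp {X Y : C} (y : X ⟶ Y) (x : Y ⟶ X) [IsIso (𝟙 Y - x ≫ y)] :
    IsIso (𝟙 X - y ≫ x) := by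
  set w := inv (𝟙 Y - x ≫ y)
  have hw : x ≫ y ≫ w = w - 𝟙 Y := by
    have h : (𝟙 Y - x ≫ y) ≫ w = 𝟙 Y := IsIso.hom_inv_id _
    rw [← h, Preadditive.sub_comp, Category.id_comp, Category.assoc]
    abel
  have hw' : w ≫ x ≫ y = w - 𝟙 Y := by
    have h : w ≫ (𝟙 Y - x ≫ y) = 𝟙 Y := IsIso.inv_hom_id _
    rw [← h, Preadditive.comp_sub, Category.comp_id]
    abel
  refine ⟨𝟙 X + y ≫ w ≫ x, ?_, ?_⟩
  · simp [Preadditive.sub_comp, Preadditive.comp_add, Preadditive.comp_sub, reassoc_of% hw]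
  · simp [Preadditive.add_comp, Preadditive.sub_comp, Preadditive.comp_sub, reassoc_of% hw']

theorem IdempotentSplits.of_isIso_id_sub {X Y Z : C} {i₁ : Y ⟶ X} {p₁ : X ⟶ Y} {i₂ : Z ⟶ X}
    {p₂ : X ⟶ Z} (htot : p₁ ≫ i₁ + p₂ ≫ i₂ = 𝟙 X)
    (hZ : ∀ δ : Z ⟶ Z, δ ≫ δ = δ → IdempotentSplits δ) {e : X ⟶ X} (he : e ≫ e = e)
    [IsIso (𝟙 Y - i₁ ≫ e ≫ p₁)] : IdempotentSplits e := by
  have : IsIso (𝟙 Y - (i₁ ≫ e) ≫ p₁) := by rwa [Category.assoc]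
  have := isIso_id_sub_comp p₁ (i₁ ≫ e)
  set t := i₂ ≫ e ≫ inv (𝟙 X - p₁ ≫ i₁ ≫ e)
  have hst : (e ≫ p₂) ≫ t = e := by
    have hp₂i₂ : p₂ ≫ i₂ = 𝟙 X - p₁ ≫ i₁ := eq_sub_of_add_eq' htot
    calc (e ≫ p₂) ≫ t = e ≫ (p₂ ≫ i₂) ≫ e ≫ inv (𝟙 X - p₁ ≫ i₁ ≫ e) := by
          simp only [t, Category.assoc]
      _ = e ≫ (𝟙 X - p₁ ≫ i₁ ≫ e) ≫ inv (𝟙 X - p₁ ≫ i₁ ≫ e) := by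
          simp only [hp₂i₂, Preadditive.sub_comp, Preadditive.comp_sub, Category.id_comp,
            Category.assoc, reassoc_of% he]
      _ = e := by simp
  refine .of_comp_eq he (e ≫ p₂) t hst (hZ _ ?_)
  calc (t ≫ e ≫ p₂) ≫ t ≫ e ≫ p₂ = t ≫ ((e ≫ p₂) ≫ t) ≫ e ≫ p₂ := by simp
    _ = t ≫ e ≫ p₂ := by rw [hst, reassoc_of% he]

theorem IdempotentSplits.add [HasBinaryBiproducts C] {X : C} {f g : X ⟶ X}
    (hf : IdempotentSplits f) (hg : IdempotentSplits g) (hfg : f ≫ g = 0) (hgf : g ≫ f = 0) :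
    IdempotentSplits (f + g) := by
  obtain ⟨Y₁, i₁, p₁, h₁, rfl⟩ := hf
  obtain ⟨Y₂, i₂, p₂, h₂, rfl⟩ := hg
  have h₁₂ : i₁ ≫ p₂ = 0 := by simpa [reassoc_of% h₁, h₂] using i₁ ≫= hfg =≫ p₂
  have h₂₁ : i₂ ≫ p₁ = 0 := by simpa [reassoc_of% h₂, h₁] using i₂ ≫= hgf =≫ p₁
  refine ⟨Y₁ ⊞ Y₂, biprod.desc i₁ i₂, biprod.lift p₁ p₂, ?_, biprod.lift_desc⟩
  ext <;> simp [h₁, h₂, h₁₂, h₂₁]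

theorem IdempotentSplits.of_retract [HasBinaryBiproducts C] {X Y : C} {e : X ⟶ X}
    (h : Retract Y X) (hi : h.i ≫ e = h.i) (hr : e ≫ h.r = h.r)
    (hsub : IdempotentSplits (e - h.r ≫ h.i)) : IdempotentSplits e := by
  have := IdempotentSplits.add ⟨Y, h.i, h.r, h.retract, rfl⟩ hsub
    (by simp [Preadditive.comp_sub, hi]) (by simp [Preadditive.sub_comp, reassoc_of% hr])
  rwa [add_sub_cancel] at this

theorem IdempotentSplits.of_total [HasBinaryBiproducts C] {X Y Z : C} [IsLocalRing (End Y)]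
    {i₁ : Y ⟶ X} {p₁ : X ⟶ Y} {i₂ : Z ⟶ X} {p₂ : X ⟶ Z} (htot : p₁ ≫ i₁ + p₂ ≫ i₂ = 𝟙 X)
    (hZ : ∀ δ : Z ⟶ Z, δ ≫ δ = δ → IdempotentSplits δ) {e : X ⟶ X} (he : e ≫ e = e) :
    IdempotentSplits e := by
  rcases IsLocalRing.isUnit_or_isUnit_of_add_one (add_sub_cancel (End.of (i₁ ≫ e ≫ p₁)) 1)
    with ha | ha
  · obtain ⟨w, hw⟩ := ha.exists_left_inv
    replace hw : i₁ ≫ e ≫ p₁ ≫ w = 𝟙 Y := by simpa using hw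
    let ρ : Retract Y X := ⟨i₁ ≫ e, e ≫ p₁ ≫ w, by simp [reassoc_of% he, hw]⟩
    refine .of_retract ρ (by simp [ρ, he]) (by simp [ρ, reassoc_of% he]) ?_
    have h0 : i₁ ≫ (e - ρ.r ≫ ρ.i) ≫ p₁ = 0 := by
      simp [ρ, Preadditive.sub_comp, Preadditive.comp_sub, reassoc_of% hw]
    have : IsIso (𝟙 Y - i₁ ≫ (e - ρ.r ≫ ρ.i) ≫ p₁) := by rw [h0, sub_zero]; infer_instance
    refine .of_isIso_id_sub htot hZ ?_
    simp [ρ, Preadditive.sub_comp, Preadditive.comp_sub, he, reassoc_of% he, reassoc_of% hw]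
  · have : IsIso (𝟙 Y - i₁ ≫ e ≫ p₁) := (isUnit_iff_isIso _).1 ha
    exact .of_isIso_id_sub htot hZ he

theorem IdempotentSplits.of_biproduct [HasFiniteBiproducts C] {n : ℕ} {f : Fin n → C}
    (hf : ∀ j, IsLocalRing (End (f j))) {e : ⨁ f ⟶ ⨁ f} (he : e ≫ e = e) :
    IdempotentSplits e := by
  induction n with
  | zero =>
    obtain rfl : e = 𝟙 _ := biproduct.hom_ext _ _ fun j => j.elim0
    exact ⟨_, 𝟙 _, 𝟙 _, Category.id_comp _, Category.id_comp _⟩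
  | succ n ih =>
    have := hf 0
    have := hasBinaryBiproducts_of_finite_biproducts C
    exact .of_total (i₁ := biproduct.ι f 0) (p₁ := biproduct.π f 0)
      (i₂ := biproduct.desc fun j : Fin n => biproduct.ι f j.succ)
      (p₂ := biproduct.lift fun j : Fin n => biproduct.π f j.succ)
      (by rw [biproduct.lift_desc, ← biproduct.total, Fin.sum_univ_succ])
      (fun _ => ih fun j => hf j.succ) he

end Splitting

section EndRing

variable {C : Type*} [Category C]

theorem Retract.isIdempotentElem {X Y : C} (h : Retract Y X) :
    IsIdempotentElem (End.of (h.r ≫ h.i)) := by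
  simp [IsIdempotentElem]

variable [Preadditive C]

theorem Retract.mem_span_iff {X Y : C} (h : Retract Y X) {u : End X} :
    u ∈ Submodule.span (End X)ᵐᵒᵖ {End.of (h.r ≫ h.i)} ↔ u ≫ h.r ≫ h.i = u :=
  h.isIdempotentElem.mem_span_op_singleton_iff

noncomputable def Retract.endRingEquiv {X Y : C} (h : Retract Y X) :
    End Y ≃+* Module.End (End X)ᵐᵒᵖ (Submodule.span (End X)ᵐᵒᵖ {End.of (h.r ≫ h.i)}) where
  toFun a := (DistribSMul.toLinearMap (End X)ᵐᵒᵖ (End X) (End.of (h.r ≫ a ≫ h.i))).restrict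
    fun u _ => h.mem_span_iff.2 (by simp)
  invFun T := h.i ≫ (T ⟨_, Submodule.mem_span_singleton_self _⟩ : End X) ≫ h.r
  left_inv a := by simp
  right_inv T := by
    have hT := h.isIdempotentElem.apply_eq_mul T
    have h1 := hT ⟨_, Submodule.mem_span_singleton_self _⟩
    have h2 := h.mem_span_iff.1 (T ⟨_, Submodule.mem_span_singleton_self _⟩).2
    ext u
    rw [hT u]
    simp only [End.mul_def, Category.assoc, LinearMap.coe_restrict_apply,
      DistribSMul.toLinearMap_apply, smul_eq_mul] at h1 h2 ⊢
    rw [h2, ← h1]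
  map_mul' a b := by ext u; simp
  map_add' a b := by
    ext u
    simp only [LinearMap.restrict_apply, DistribSMul.toLinearMap_apply, smul_eq_mul, End.mul_def,
      LinearMap.add_apply, Submodule.coe_add]
    rw [Preadditive.add_comp, Preadditive.comp_add, Preadditive.comp_add]

namespace Limits.Bicone

theorem completeOrthogonalIdempotents {J : Type*} [Fintype J] {F : J → C} (b : Bicone F)
    (total : ∑ j, b.π j ≫ b.ι j = 𝟙 b.pt) :
    CompleteOrthogonalIdempotents fun j => End.of (b.π j ≫ b.ι j) where
  idem j := by simp [IsIdempotentElem]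
  ortho j k hjk := by simp [bicone_ι_π_ne_assoc _ hjk.symm]
  complete := total

theorem isSemiperfectRing_end {n : ℕ} {F : Fin n → C} (b : Bicone F)
    (total : ∑ j, b.π j ≫ b.ι j = 𝟙 b.pt) (hF : ∀ j, IsLocalRing (End (F j))) :
    IsSemiperfectRing (End b.pt) :=
  ⟨n, _, (b.completeOrthogonalIdempotents total).isInternal_span,
    fun j => have := hF j; .of_ringEquiv (b.retract j).endRingEquiv⟩

def ofIsoPt {J : Type*} {F : J → C} (b : Bicone F) {X : C} (φ : X ≅ b.pt) : Bicone F where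
  pt := X
  π j := φ.hom ≫ b.π j
  ι j := b.ι j ≫ φ.inv
  ι_π j j' := by simp [b.ι_π]

theorem ofIsoPt_total {J : Type*} [Fintype J] {F : J → C} {b : Bicone F}
    (total : ∑ j, b.π j ≫ b.ι j = 𝟙 b.pt) {X : C} (φ : X ≅ b.pt) :
    ∑ j, (b.ofIsoPt φ).π j ≫ (b.ofIsoPt φ).ι j = 𝟙 (b.ofIsoPt φ).pt := by
  calc ∑ j, (φ.hom ≫ b.π j) ≫ b.ι j ≫ φ.inv = φ.hom ≫ (∑ j, b.π j ≫ b.ι j) ≫ φ.inv := by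
        simp only [Preadditive.sum_comp, Preadditive.comp_sum, Category.assoc]
    _ = 𝟙 X := by simp [total]

def ofRetracts {J : Type*} {X : C} {Y : J → C} (ρ : ∀ j, Retract (Y j) X)
    (hρ : _root_.Pairwise fun j k => (ρ j).i ≫ (ρ k).r = 0) : Bicone Y where
  pt := X
  π j := (ρ j).r
  ι j := (ρ j).i
  ι_π j k := by
    split_ifs with hjk
    · subst hjk; simp
    · exact hρ hjk

end Limits.Bicone

end EndRing

end CategoryTheory

section KrullSchmidt

variable {A : Type u} [Category.{v} A] [Preadditive A] [HasFiniteBiproducts A]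

theorem IsKrullSchmidtCategory.isIdempotentComplete (h : IsKrullSchmidtCategory A) :
    IsIdempotentComplete A := by
  refine ⟨fun X e he => ?_⟩
  obtain ⟨n, f, ⟨φ⟩, hf⟩ := h X
  refine Idempotents.split_imp_of_iso φ.symm (φ.inv ≫ e ≫ φ.hom) e (by simp)
    (IdempotentSplits.of_biproduct hf ?_)
  simp [reassoc_of% he]

theorem IsKrullSchmidtCategory.isSemiperfectRing_end (h : IsKrullSchmidtCategory A) (X : A) :
    IsSemiperfectRing (End X) := by
  obtain ⟨n, f, ⟨φ⟩, hf⟩ := h X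
  exact ((biproduct.bicone f).ofIsoPt φ).isSemiperfectRing_end
    ((biproduct.bicone f).ofIsoPt_total biproduct.total φ) hf

theorem IsKrullSchmidtCategory.of_isIdempotentComplete (hA : IsIdempotentComplete A)
    (hsp : ∀ X : A, IsSemiperfectRing (End X)) : IsKrullSchmidtCategory A := by
  intro X
  obtain ⟨n, P, hP, hloc⟩ := hsp X
  obtain ⟨e, he, hPe⟩ := hP.exists_completeOrthogonalIdempotents
  choose Y i p hip hpi using fun j => hA.idempotents_split X (e j) (he.idem j).eq
  let ρ j : Retract (Y j) X := ⟨i j, p j, hip j⟩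
  let b := Bicone.ofRetracts ρ fun j k hjk => by
    have h0 : e j ≫ e k = 0 := he.ortho hjk.symm
    simpa [← hpi, ρ, hip, reassoc_of% hip] using i j ≫= h0 =≫ p k
  have total : ∑ j, b.π j ≫ b.ι j = 𝟙 X := by
    simp only [b, ρ, Bicone.ofRetracts, hpi]
    exact he.complete
  refine ⟨n, Y, ⟨biproduct.uniqueUpToIso Y (isBilimitOfTotal b total)⟩, fun j => ?_⟩
  have : IsLocalRing (Module.End (End X)ᵐᵒᵖ (Submodule.span (End X)ᵐᵒᵖ {End.of (p j ≫ i j)})) := by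
    rw [hpi j, ← hPe j]
    exact hloc j
  exact .of_ringEquiv (ρ j).endRingEquiv.symm

end KrullSchmidt

/-- An additive category is a Krull-Schmidt category if and only if it has split
idempotents and the endomorphism ring of every object is semi-perfect. -/
theorem isKrullSchmidt_iff_idempotentComplete_and_semiperfect
    (A : Type u) [Category.{v} A] [Preadditive A] [HasFiniteBiproducts A] :
    IsKrullSchmidtCategory A ↔
      IsIdempotentComplete A ∧ ∀ X : A, IsSemiperfectRing (End X) :=
  ⟨fun h => ⟨h.isIdempotentComplete, h.isSemiperfectRing_end⟩,
    fun h => .of_isIdempotentComplete h.1 h.2⟩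
end

section
/- Let X be an object of an abelian category that satisfies both the ascending chain condition and the descending chain condition on its subobjects (equivalently, X has finite length). Then X satisfies the bi-chain condition. -/
/-! The composites `X₀ ⟶ Xₙ` of the epimorphisms of a bi-chain have kernels forming an
ascending chain of subobjects of `X₀`, and the composites `Xₙ ⟶ X₀` of the monomorphisms have
images forming a descending chain. Once the kernel chain is stationary, `αₙ` is also a
monomorphism (a morphism into `ker αₙ` lifts, up to refinement, along the epimorphism
`X₀ ⟶ Xₙ`), hence an isomorphism; once the image chain is stationary, `βₙ` is an isomorphism. -/

open CategoryTheory CategoryTheory.Limits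

universe v u

/-- An object `X` satisfies the *bi-chain condition* if for every bi-chain
`X_n ⟶ X_{n+1} ⟶ X_n` (with the `α n` epimorphisms and the `β n` monomorphisms)
starting at `X₀ = X`, all `α n` and `β n` are isomorphisms for large enough `n`. -/
def BichainCondition {A : Type u} [Category.{v} A] (X : A) : Prop :=
  ∀ (obj : ℕ → A) (α : ∀ n, obj n ⟶ obj (n + 1)) (β : ∀ n, obj (n + 1) ⟶ obj n),
    obj 0 = X → (∀ n, Epi (α n)) → (∀ n, Mono (β n)) →
    ∃ n₀ : ℕ, ∀ n, n₀ ≤ n → IsIso (α n) ∧ IsIso (β n)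

namespace CategoryTheory

variable {C : Type u} [Category.{v} C]

lemma Functor.epi_map_of_epi_map_succ (F : ℕ ⥤ C)
    (hF : ∀ n : ℕ, Epi (F.map (homOfLE (n.le_add_right 1)))) {i j : ℕ} (hij : i ≤ j) :
    Epi (F.map (homOfLE hij)) := by
  induction j, hij using Nat.le_induction with
  | base => rw [Subsingleton.elim (homOfLE _) (𝟙 i), F.map_id]; infer_instance
  | succ j hij ih =>
    rw [← homOfLE_comp hij (j.le_add_right 1), F.map_comp]
    exact epi_comp' ih (hF j)

lemma Functor.mono_map_of_mono_map_succ (G : ℕᵒᵖ ⥤ C)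
    (hG : ∀ n : ℕ, Mono (G.map (homOfLE (n.le_add_right 1)).op)) {i j : ℕ} (hij : i ≤ j) :
    Mono (G.map (homOfLE hij).op) := by
  induction j, hij using Nat.le_induction with
  | base => rw [Subsingleton.elim (homOfLE _) (𝟙 i), op_id, G.map_id]; infer_instance
  | succ j hij ih =>
    rw [← homOfLE_comp hij (j.le_add_right 1), op_comp, G.map_comp]
    exact mono_comp' (hG j) ih

lemma Abelian.mono_of_kernelSubobject_comp_le [Abelian C] {X Y Z : C} (f : X ⟶ Y) [Epi f]
    (g : Y ⟶ Z) (h : kernelSubobject (f ≫ g) ≤ kernelSubobject f) : Mono g := by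
  refine Preadditive.mono_of_cancel_zero g fun y hy => ?_
  obtain ⟨A', π, _, x, hx⟩ := surjective_up_to_refinements_of_epi f y
  have hxfg : (kernelSubobject (f ≫ g)).Factors x := by
    rw [kernelSubobject_factors_iff, ← Category.assoc, ← hx, Category.assoc, hy, comp_zero]
  have hxf : x ≫ f = 0 := (kernelSubobject_factors_iff f x).1 (Subobject.factors_of_le x h hxfg)
  rw [← cancel_epi π, hx, hxf, comp_zero]

lemma Abelian.exists_isIso_map_succ_of_epi [Abelian C] (F : ℕ ⥤ C)
    [WellFoundedGT (Subobject (F.obj 0))]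
    (hF : ∀ n : ℕ, Epi (F.map (homOfLE (n.le_add_right 1)))) :
    ∃ n₀ : ℕ, ∀ n, n₀ ≤ n → IsIso (F.map (homOfLE (n.le_add_right 1))) := by
  have hK_mono : Monotone fun n : ℕ => kernelSubobject (F.map (homOfLE n.zero_le)) :=
    fun i j hij => by
      simp only [← homOfLE_comp (Nat.zero_le i) hij, F.map_comp, kernelSubobject_comp_le]
  obtain ⟨n₀, hK⟩ := WellFoundedGT.monotone_chain_condition ⟨_, hK_mono⟩
  refine ⟨n₀, fun n hn => ?_⟩
  have := F.epi_map_of_epi_map_succ hF n.zero_le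
  have := hF n
  have : Mono (F.map (homOfLE (n.le_add_right 1))) := by
    refine Abelian.mono_of_kernelSubobject_comp_le (F.map (homOfLE n.zero_le)) _ ?_
    rw [← F.map_comp, homOfLE_comp]
    exact ((hK (n + 1) (by omega)).symm.trans (hK n hn)).le
  exact isIso_of_mono_of_epi _

lemma exists_isIso_map_succ_of_mono (G : ℕᵒᵖ ⥤ C)
    [WellFoundedLT (Subobject (G.obj (Opposite.op 0)))]
    (hG : ∀ n : ℕ, Mono (G.map (homOfLE (n.le_add_right 1)).op)) :
    ∃ n₀ : ℕ, ∀ n, n₀ ≤ n → IsIso (G.map (homOfLE (n.le_add_right 1)).op) := by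
  have (n : ℕ) : Mono (G.map (homOfLE n.zero_le).op) := G.mono_map_of_mono_map_succ hG _
  have hM_anti : Antitone fun n : ℕ => Subobject.mk (G.map (homOfLE n.zero_le).op) :=
    fun i j hij => Subobject.mk_le_mk_of_comm (G.map (homOfLE hij).op)
      (by rw [← G.map_comp, ← op_comp, homOfLE_comp])
  obtain ⟨n₀, hM⟩ := WellFoundedLT.antitone_chain_condition hM_anti
  refine ⟨n₀, fun n hn => ?_⟩
  by_contra hn'
  have hlt := (Subobject.mk_lt_mk_iff_of_comm (i₂ := G.map (homOfLE n.zero_le).op) _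
    (by rw [← G.map_comp, ← op_comp, homOfLE_comp])).2 hn'
  exact hlt.ne ((hM (n + 1) (by omega)).symm.trans (hM n hn))

end CategoryTheory

/-- An object of an abelian category satisfying both the ascending and the descending
chain condition on its subobjects (equivalently, an object of finite length) satisfies
the bi-chain condition. -/
theorem bichainCondition_of_finiteLength {A : Type u} [Category.{v} A] [Abelian A]
    (X : A) (hacc : WellFoundedGT (Subobject X)) (hdcc : WellFoundedLT (Subobject X)) :
    BichainCondition X := by
  rintro obj α β rfl hα hβ
  have : WellFoundedGT (Subobject ((Functor.ofSequence α).obj 0)) := hacc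
  have : WellFoundedLT (Subobject ((Functor.ofOpSequence β).obj (Opposite.op 0))) := hdcc
  obtain ⟨n₁, h₁⟩ := Abelian.exists_isIso_map_succ_of_epi (Functor.ofSequence α)
    fun n => by rw [Functor.ofSequence_map_homOfLE_succ]; exact hα n
  obtain ⟨n₂, h₂⟩ := exists_isIso_map_succ_of_mono (Functor.ofOpSequence β)
    fun n => by rw [Functor.ofOpSequence_map_homOfLE_succ]; exact hβ n
  refine ⟨max n₁ n₂, fun n hn => ⟨?_, ?_⟩⟩
  · rw [← Functor.ofSequence_map_homOfLE_succ α n]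
    exact h₁ n (le_of_max_le_left hn)
  · rw [← Functor.ofOpSequence_map_homOfLE_succ β n]
    exact h₂ n (le_of_max_le_right hn)
end

section
/- (Fitting's lemma) Let X be an object of an abelian category satisfying the bi-chain condition and let φ be an endomorphism of X. Then: (1) there exists an integer r such that the canonical monomorphisms Im φ^r → X and Ker φ^r → X exhibit X as the direct sum Im φ^r ⊕ Ker φ^r; (2) if X is indecomposable, then φ is either an isomorphism or nilpotent. -/
open CategoryTheory CategoryTheory.Limits

attribute [local instance] CategoryTheory.Abelian.hasFiniteBiproducts
attribute [local instance] CategoryTheory.Limits.hasBinaryBiproducts_of_finite_biproducts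

universe v u

/-- The `n`-fold composite `φ^n` of an endomorphism `φ`. -/
def iterComp {A : Type u} [Category.{v} A] {X : A} (φ : X ⟶ X) : ℕ → (X ⟶ X)
  | 0 => 𝟙 X
  | n + 1 => iterComp φ n ≫ φ

section FittingAux

set_option linter.unusedSectionVars false

variable {A : Type u} [Category.{v} A] [Abelian A] {X : A} (φ : X ⟶ X)

lemma iterComp_succ_left (n : ℕ) : iterComp φ (n + 1) = φ ≫ iterComp φ n := by
  induction n with
  | zero => simp [iterComp]
  | succ n ih =>
      show iterComp φ (n + 1) ≫ φ = φ ≫ (iterComp φ n ≫ φ)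
      rw [ih, Category.assoc]

/-- The square exhibiting `φ^{n+2} = φ^{n+1} ≫ φ`. -/
def aSq (n : ℕ) : Arrow.mk (iterComp φ (n + 1)) ⟶ Arrow.mk (iterComp φ (n + 2)) :=
  Arrow.homMk (u := 𝟙 X) (v := φ) (by simp [iterComp])

/-- The square exhibiting `φ^{n+2} = φ ≫ φ^{n+1}`. -/
def bSq (n : ℕ) : Arrow.mk (iterComp φ (n + 2)) ⟶ Arrow.mk (iterComp φ (n + 1)) :=
  Arrow.homMk (u := φ) (v := 𝟙 X) (by simp [iterComp_succ_left φ (n + 1)])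

/-- The epimorphism `Im φ^{n+1} ⟶ Im φ^{n+2}` induced by `φ`. -/
noncomputable def amap (n : ℕ) : image (iterComp φ (n + 1)) ⟶ image (iterComp φ (n + 2)) :=
  image.map (aSq φ n)

/-- The monomorphism `Im φ^{n+2} ⟶ Im φ^{n+1}`. -/
noncomputable def bmap (n : ℕ) : image (iterComp φ (n + 2)) ⟶ image (iterComp φ (n + 1)) :=
  image.map (bSq φ n)

lemma amap_fac (n : ℕ) :
    factorThruImage (iterComp φ (n + 1)) ≫ amap φ n = factorThruImage (iterComp φ (n + 2)) := by
  have := image.factor_map (aSq φ n)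
  simpa [amap, aSq] using this

lemma amap_ι (n : ℕ) :
    amap φ n ≫ image.ι (iterComp φ (n + 2)) = image.ι (iterComp φ (n + 1)) ≫ φ := by
  have := image.map_ι (aSq φ n)
  simpa [amap, aSq] using this

lemma bmap_ι (n : ℕ) :
    bmap φ n ≫ image.ι (iterComp φ (n + 1)) = image.ι (iterComp φ (n + 2)) := by
  have := image.map_ι (bSq φ n)
  simpa [bmap, bSq] using this

instance amap_epi (n : ℕ) : Epi (amap φ n) := by
  have h := amap_fac φ n
  have : Epi (factorThruImage (iterComp φ (n + 1)) ≫ amap φ n) := by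
    rw [h]; infer_instance
  exact epi_of_epi (factorThruImage (iterComp φ (n + 1))) (amap φ n)

instance bmap_mono (n : ℕ) : Mono (bmap φ n) := by
  have h := bmap_ι φ n
  have : Mono (bmap φ n ≫ image.ι (iterComp φ (n + 1))) := by
    rw [h]; infer_instance
  exact mono_of_mono (bmap φ n) (image.ι (iterComp φ (n + 1)))

/-- The objects of the bi-chain: `X, Im φ, Im φ², …`. -/
noncomputable def fobj : ℕ → A
  | 0 => X
  | n + 1 => image (iterComp φ (n + 1))

/-- The epimorphisms of the bi-chain. -/
noncomputable def falpha : ∀ n, fobj φ n ⟶ fobj φ (n + 1)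
  | 0 => factorThruImage (iterComp φ 1)
  | n + 1 => amap φ n

/-- The monomorphisms of the bi-chain. -/
noncomputable def fbeta : ∀ n, fobj φ (n + 1) ⟶ fobj φ n
  | 0 => image.ι (iterComp φ 1)
  | n + 1 => bmap φ n

lemma falpha_epi (n : ℕ) : Epi (falpha φ n) := by
  cases n with
  | zero => show Epi (factorThruImage (iterComp φ 1)); infer_instance
  | succ n => exact amap_epi φ n

lemma fbeta_mono (n : ℕ) : Mono (fbeta φ n) := by
  cases n with
  | zero => show Mono (image.ι (iterComp φ 1)); infer_instance
  | succ n => exact bmap_mono φ n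

/-- Iterated `amap`: the map `Im φ^{m+1} ⟶ Im φ^{m+k+1}` induced by `φ^k`. -/
noncomputable def Amap (m : ℕ) :
    ∀ k, (image (iterComp φ (m + 1)) ⟶ image (iterComp φ (m + k + 1)))
  | 0 => 𝟙 _
  | k + 1 => Amap m k ≫ amap φ (m + k)

/-- Iterated `bmap`: the inclusion `Im φ^{m+k+1} ⟶ Im φ^{m+1}`. -/
noncomputable def Bmap (m : ℕ) :
    ∀ k, (image (iterComp φ (m + k + 1)) ⟶ image (iterComp φ (m + 1)))
  | 0 => 𝟙 _
  | k + 1 => bmap φ (m + k) ≫ Bmap m k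

lemma Amap_ι (m : ℕ) : ∀ k, Amap φ m k ≫ image.ι (iterComp φ (m + k + 1)) =
    image.ι (iterComp φ (m + 1)) ≫ iterComp φ k
  | 0 => by
      show 𝟙 _ ≫ image.ι (iterComp φ (m + 1)) = image.ι (iterComp φ (m + 1)) ≫ 𝟙 X
      simp
  | k + 1 => by
      show (Amap φ m k ≫ amap φ (m + k)) ≫ image.ι (iterComp φ (m + k + 2)) =
        image.ι (iterComp φ (m + 1)) ≫ (iterComp φ k ≫ φ)
      rw [Category.assoc, amap_ι φ (m + k), ← Category.assoc, Amap_ι m k, Category.assoc]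

lemma Bmap_ι (m : ℕ) : ∀ k, Bmap φ m k ≫ image.ι (iterComp φ (m + 1)) =
    image.ι (iterComp φ (m + k + 1))
  | 0 => by
      show 𝟙 _ ≫ image.ι (iterComp φ (m + 1)) = image.ι (iterComp φ (m + 1))
      simp
  | k + 1 => by
      show (bmap φ (m + k) ≫ Bmap φ m k) ≫ image.ι (iterComp φ (m + 1)) =
        image.ι (iterComp φ (m + k + 2))
      rw [Category.assoc, Bmap_ι m k, bmap_ι φ (m + k)]

lemma Amap_isIso (m : ℕ) (hm : ∀ n, m ≤ n → IsIso (amap φ n)) : ∀ k, IsIso (Amap φ m k)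
  | 0 => by
      show IsIso (𝟙 (image (iterComp φ (m + 1))))
      infer_instance
  | k + 1 => by
      show IsIso (Amap φ m k ≫ amap φ (m + k))
      have := Amap_isIso m hm k
      have := hm (m + k) (Nat.le_add_right m k)
      infer_instance

lemma Bmap_isIso (m : ℕ) (hm : ∀ n, m ≤ n → IsIso (bmap φ n)) : ∀ k, IsIso (Bmap φ m k)
  | 0 => by
      show IsIso (𝟙 (image (iterComp φ (m + 1))))
      infer_instance
  | k + 1 => by
      show IsIso (bmap φ (m + k) ≫ Bmap φ m k)
      have := Bmap_isIso m hm k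
      have := hm (m + k) (Nat.le_add_right m k)
      infer_instance

/-- The key consequence of the bi-chain condition: for some `r ≥ 1` the endomorphism of
`Im φ^r` induced by `φ^r` is an isomorphism. -/
lemma fitting_key (h : BichainCondition X) :
    ∃ r : ℕ, 0 < r ∧
      IsIso (image.ι (iterComp φ r) ≫ factorThruImage (iterComp φ r)) := by
  obtain ⟨m, hn₀⟩ := h (fobj φ) (falpha φ) (fbeta φ) rfl (falpha_epi φ) (fbeta_mono φ)
  have ha : ∀ n, m ≤ n → IsIso (amap φ n) := fun n hn =>
    (hn₀ (n + 1) (le_trans hn (Nat.le_succ n))).1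
  have hb : ∀ n, m ≤ n → IsIso (bmap φ n) := fun n hn =>
    (hn₀ (n + 1) (le_trans hn (Nat.le_succ n))).2
  refine ⟨m + 1, Nat.succ_pos m, ?_⟩
  have key : image.ι (iterComp φ (m + 1)) ≫ factorThruImage (iterComp φ (m + 1)) =
      Amap φ m (m + 1) ≫ Bmap φ m (m + 1) := by
    have h1 : (image.ι (iterComp φ (m + 1)) ≫ factorThruImage (iterComp φ (m + 1))) ≫
        image.ι (iterComp φ (m + 1)) =
        (Amap φ m (m + 1) ≫ Bmap φ m (m + 1)) ≫ image.ι (iterComp φ (m + 1)) := by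
      rw [Category.assoc, image.fac, Category.assoc, Bmap_ι φ m (m + 1), Amap_ι φ m (m + 1)]
    exact (cancel_mono (image.ι (iterComp φ (m + 1)))).mp h1
  rw [key]
  have := Amap_isIso φ m ha (m + 1)
  have := Bmap_isIso φ m hb (m + 1)
  infer_instance

/-- Splitting of `X` as `Im f ⊕ Ker f` whenever the induced endomorphism of `Im f`
is an isomorphism. -/
lemma fitting_split (f : X ⟶ X) (hθ : IsIso (image.ι f ≫ factorThruImage f)) :
    ∃ (π₁ : X ⟶ image f) (π₂ : X ⟶ kernel f),
      π₁ ≫ image.ι f + π₂ ≫ kernel.ι f = 𝟙 X ∧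
      image.ι f ≫ π₁ = 𝟙 (image f) ∧
      kernel.ι f ≫ π₂ = 𝟙 (kernel f) ∧
      image.ι f ≫ π₂ = 0 ∧ kernel.ι f ≫ π₁ = 0 := by
  set θ : image f ⟶ image f := image.ι f ≫ factorThruImage f with hθdef
  have fac : factorThruImage f ≫ image.ι f = f := image.fac f
  have kfac : kernel.ι f ≫ f = 0 := kernel.condition f
  have kιe : kernel.ι f ≫ factorThruImage f = 0 := by
    have h1 : (kernel.ι f ≫ factorThruImage f) ≫ image.ι f = 0 ≫ image.ι f := by
      rw [Category.assoc, fac, kfac, zero_comp]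
    exact (cancel_mono (image.ι f)).mp h1
  have hιf : image.ι f ≫ f = θ ≫ image.ι f := by
    rw [hθdef, Category.assoc, fac]
  have hinv : (image.ι f ≫ factorThruImage f) ≫ inv θ = 𝟙 (image f) := IsIso.hom_inv_id θ
  have hker : (𝟙 X - (factorThruImage f ≫ inv θ) ≫ image.ι f) ≫ f = 0 := by
    rw [Preadditive.sub_comp, Category.id_comp, Category.assoc, Category.assoc, hιf,
      ← Category.assoc (inv θ) θ, IsIso.inv_hom_id, Category.id_comp, fac, sub_self]
  refine ⟨factorThruImage f ≫ inv θ, kernel.lift f (𝟙 X - (factorThruImage f ≫ inv θ) ≫ image.ι f) hker, ?_, ?_, ?_, ?_, ?_⟩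
  · rw [kernel.lift_ι]; abel
  · rw [← Category.assoc]
    show θ ≫ inv θ = 𝟙 (image f)
    exact IsIso.hom_inv_id θ
  · -- kernel.ι ≫ π₂ = 𝟙
    have h1 : (kernel.ι f ≫ kernel.lift f (𝟙 X - (factorThruImage f ≫ inv θ) ≫ image.ι f) hker) ≫ kernel.ι f = 𝟙 (kernel f) ≫ kernel.ι f := by
      rw [Category.assoc, kernel.lift_ι, Category.id_comp, Preadditive.comp_sub,
        Category.comp_id, ← Category.assoc, ← Category.assoc, kιe, zero_comp, zero_comp,
        sub_zero]
    exact (cancel_mono (kernel.ι f)).mp h1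
  · -- image.ι ≫ π₂ = 0
    have h1 : (image.ι f ≫ kernel.lift f (𝟙 X - (factorThruImage f ≫ inv θ) ≫ image.ι f) hker) ≫ kernel.ι f = 0 ≫ kernel.ι f := by
      rw [Category.assoc, kernel.lift_ι, Preadditive.comp_sub, Category.comp_id,
        ← Category.assoc, ← Category.assoc, hinv, Category.id_comp,
        sub_self, zero_comp]
    exact (cancel_mono (kernel.ι f)).mp h1
  · rw [← Category.assoc, kιe, zero_comp]

end FittingAux

/-- Fitting's lemma: let `X` be an object of an abelian category satisfying the bi-chain
condition and `φ` an endomorphism of `X`.  Then (1) there is an `r` such that the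
canonical monomorphisms `Im φ^r ⟶ X` and `Ker φ^r ⟶ X` exhibit `X` as the direct sum
`Im φ^r ⊕ Ker φ^r`; and (2) if `X` is indecomposable then `φ` is an isomorphism or
nilpotent. -/
theorem fitting_lemma {A : Type u} [Category.{v} A] [Abelian A]
    (X : A) (h : BichainCondition X) (φ : X ⟶ X) :
    (∃ r : ℕ,
      ∃ (π₁ : X ⟶ image (iterComp φ r)) (π₂ : X ⟶ kernel (iterComp φ r)),
        π₁ ≫ image.ι (iterComp φ r) + π₂ ≫ kernel.ι (iterComp φ r) = 𝟙 X ∧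
        image.ι (iterComp φ r) ≫ π₁ = 𝟙 (image (iterComp φ r)) ∧
        kernel.ι (iterComp φ r) ≫ π₂ = 𝟙 (kernel (iterComp φ r))) ∧
    (Indecomposable X → IsIso φ ∨ ∃ n : ℕ, 0 < n ∧ iterComp φ n = 0) := by
  obtain ⟨r, hr, hθ⟩ := fitting_key φ h
  obtain ⟨π₁, π₂, total, ιπ₁, kιπ₂, ιπ₂, kιπ₁⟩ := fitting_split (iterComp φ r) hθ
  refine ⟨⟨r, π₁, π₂, total, ιπ₁, kιπ₂⟩, ?_⟩
  intro hX
  have hiso : X ≅ image (iterComp φ r) ⊞ kernel (iterComp φ r) := by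
    refine ⟨biprod.lift π₁ π₂, biprod.desc (image.ι (iterComp φ r)) (kernel.ι (iterComp φ r)),
      ?_, ?_⟩
    · rw [biprod.lift_desc, total]
    · apply biprod.hom_ext' <;> apply biprod.hom_ext <;>
        simp [ιπ₁, ιπ₂, kιπ₁, kιπ₂]
  rcases hX.2 _ _ hiso with hI | hK
  · -- image is zero : φ^r = 0
    right
    refine ⟨r, hr, ?_⟩
    have hι0 : image.ι (iterComp φ r) = 0 := hI.eq_zero_of_src _
    have : factorThruImage (iterComp φ r) ≫ image.ι (iterComp φ r) = 0 := by
      rw [hι0, comp_zero]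
    exact (image.fac (iterComp φ r)).symm.trans this
  · -- kernel is zero : φ is an isomorphism
    left
    have hkι0 : kernel.ι (iterComp φ r) = 0 := hK.eq_zero_of_src _
    have hmonof : Mono (iterComp φ r) := Preadditive.mono_of_kernel_zero hkι0
    have hπ₁ι : π₁ ≫ image.ι (iterComp φ r) = 𝟙 X := by
      have h1 := total
      rw [hkι0, comp_zero, add_zero] at h1
      exact h1
    have hιepi : Epi (image.ι (iterComp φ r)) := ⟨fun g k hg => by
      have h2 := congrArg (fun t => π₁ ≫ t) hg
      simpa [← Category.assoc, hπ₁ι] using h2⟩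
    have hιiso : IsIso (image.ι (iterComp φ r)) := isIso_of_mono_of_epi _
    have hemono : Mono (factorThruImage (iterComp φ r)) := by
      have h3 : Mono (factorThruImage (iterComp φ r) ≫ image.ι (iterComp φ r)) := by
        rw [image.fac]; exact hmonof
      exact mono_of_mono (factorThruImage (iterComp φ r)) (image.ι (iterComp φ r))
    have heiso : IsIso (factorThruImage (iterComp φ r)) := isIso_of_mono_of_epi _
    have hfiso : IsIso (iterComp φ r) := by
      have h4 : IsIso (factorThruImage (iterComp φ r) ≫ image.ι (iterComp φ r)) :=
        inferInstance
      exact (image.fac (iterComp φ r)) ▸ h4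
    obtain ⟨m, rfl⟩ : ∃ m, r = m + 1 := ⟨r - 1, (Nat.succ_pred_eq_of_pos hr).symm⟩
    have hepi : Epi φ := by
      haveI := hfiso
      have h5 : Epi (iterComp φ m ≫ φ) := inferInstanceAs (Epi (iterComp φ (m + 1)))
      exact epi_of_epi (iterComp φ m) φ
    have hmono : Mono φ := by
      have h6 : Mono (φ ≫ iterComp φ m) := by
        rw [← iterComp_succ_left φ m]; exact hmonof
      exact mono_of_mono φ (iterComp φ m)
    exact isIso_of_mono_of_epi φ
end

section
/- (Atiyah) Let X be an object of an abelian category satisfying the bi-chain condition. Then X admits a decomposition into a finite direct sum X ≅ X_1 ⊕ … ⊕ X_n of indecomposable objects, each of which has a local endomorphism ring. -/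
open CategoryTheory CategoryTheory.Limits

attribute [local instance] CategoryTheory.Abelian.hasFiniteBiproducts
attribute [local instance] CategoryTheory.Limits.hasBinaryBiproducts_of_finite_biproducts

universe v u

/-!
Existence: if `X` were not a finite biproduct of indecomposables, it would split off a nonzero
summand, `X ≅ X₁ ⊞ Z₀`, with `X₁` again not such a biproduct, and so on forever; the
projections `Xₙ ⟶ Xₙ₊₁` and inclusions `Xₙ₊₁ ⟶ Xₙ` then form a bi-chain at `X` that never
becomes stationary.

Locality is Fitting's lemma. Summands inherit the bi-chain condition, so let `Y` be an
indecomposable summand and `f : End Y`. The images `im fⁿ`, with the maps `im fⁿ ⟶ im fⁿ⁺¹`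
induced by `f` and the inclusions `im fⁿ⁺¹ ⟶ im fⁿ`, form a bi-chain at `Y`, stationary from
some `N` on. Hence either `f^N = 0` or `f` is invertible, and a nontrivial ring in which every
element is a unit or nilpotent is local.
-/

lemma CategoryTheory.End.pow_succ_eq_pow_comp {A : Type u} [Category.{v} A] {Y : A} (f : End Y)
    (n : ℕ) : f ^ (n + 1) = (f ^ n) ≫ f := by
  rw [pow_succ', End.mul_def]

lemma CategoryTheory.End.pow_succ_eq_comp_pow {A : Type u} [Category.{v} A] {Y : A} (f : End Y)
    (n : ℕ) : f ^ (n + 1) = f ≫ (f ^ n) := by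
  rw [pow_succ, End.mul_def]

lemma CategoryTheory.End.pow_comp_eq_comp_pow {A : Type u} [Category.{v} A] {U Y : A}
    {g : End U} {f : End Y} {ι : U ⟶ Y} (h : g ≫ ι = ι ≫ f) (k : ℕ) :
    (g ^ k) ≫ ι = ι ≫ (f ^ k) := by
  induction k with
  | zero => simp only [pow_zero, End.one_def, Category.id_comp, Category.comp_id]
  | succ k ih =>
    rw [End.pow_succ_eq_comp_pow, End.pow_succ_eq_comp_pow, Category.assoc, ih,
      ← Category.assoc, h, Category.assoc]

noncomputable def biprodBiproductIso {A : Type u} [Category.{v} A] [Preadditive A]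
    [HasFiniteBiproducts A] {ι₁ ι₂ : Type} [Finite ι₁] [Finite ι₂] (f₁ : ι₁ → A)
    (f₂ : ι₂ → A) : (⨁ f₁) ⊞ (⨁ f₂) ≅ ⨁ Sum.elim f₁ f₂ :=
  IsLimit.conePointUniqueUpToIso
    (Fan.combPairIsLimit (biproduct.isLimit f₁) (biproduct.isLimit f₂)
      (BinaryBiproduct.isLimit _ _))
    (biproduct.isLimit _)

section Bichain

variable {A : Type u} [Category.{v} A]

lemma BichainCondition.of_iso {X Y : A} (e : X ≅ Y) (hX : BichainCondition X) :
    BichainCondition Y := by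
  rintro obj α β rfl hα hβ
  let obj' : ℕ → A := fun | 0 => X | n + 1 => obj (n + 1)
  let α' : ∀ n, obj' n ⟶ obj' (n + 1) := fun | 0 => e.hom ≫ α 0 | n + 1 => α (n + 1)
  let β' : ∀ n, obj' (n + 1) ⟶ obj' n := fun | 0 => β 0 ≫ e.inv | n + 1 => β (n + 1)
  have hα' : ∀ n, Epi (α' n) := by
    rintro (_ | n)
    · exact epi_comp _ _
    · exact hα (n + 1)
  have hβ' : ∀ n, Mono (β' n) := by
    rintro (_ | n)
    · exact mono_comp _ _
    · exact hβ (n + 1)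
  obtain ⟨n₀, hn₀⟩ := hX obj' α' β' rfl hα' hβ'
  refine ⟨n₀ + 1, fun n hn => ?_⟩
  obtain ⟨m, rfl⟩ : ∃ m, n = m + 1 := ⟨n - 1, by omega⟩
  exact hn₀ (m + 1) (by omega)

end Bichain

section Summands

variable {A : Type u} [Category.{v} A] [Preadditive A] [HasBinaryBiproducts A]

lemma BichainCondition.of_biprod {U Z : A} (h : BichainCondition (U ⊞ Z)) :
    BichainCondition U := by
  rintro obj α β rfl hα hβ
  obtain ⟨n₀, hn₀⟩ := h (fun n => obj n ⊞ Z) (fun n => biprod.map (α n) (𝟙 Z))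
    (fun n => biprod.map (β n) (𝟙 Z)) rfl (fun n => inferInstance) (fun n => inferInstance)
  refine ⟨n₀, fun n hn => ?_⟩
  obtain ⟨_, _⟩ := hn₀ n hn
  exact ⟨isIso_left_of_isIso_biprod_map (α n) (𝟙 Z), isIso_left_of_isIso_biprod_map (β n) (𝟙 Z)⟩

lemma BichainCondition.exists_isZero_of_iso_biprod {X : A} (hX : BichainCondition X)
    (obj Z : ℕ → A) (h0 : obj 0 = X) (e : ∀ n, obj n ≅ obj (n + 1) ⊞ Z n) :
    ∃ n, IsZero (Z n) := by
  obtain ⟨n, hn⟩ := hX obj (fun n => (e n).hom ≫ biprod.fst) (fun n => biprod.inl ≫ (e n).inv)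
    h0 (fun n => epi_comp _ _) (fun n => mono_comp _ _)
  have := (hn n le_rfl).2
  have : IsIso (biprod.inl : obj (n + 1) ⟶ _ ⊞ Z n) := by
    simpa using (inferInstance : IsIso ((biprod.inl ≫ (e n).inv) ≫ (e n).hom))
  exact ⟨n, (Biprod.isIso_inl_iff_isZero _ _).1 this⟩

variable [HasCokernels A]

noncomputable def isoBiprodCokernelOfIsSplitMono {U W : A} (ι : U ⟶ W) [IsSplitMono ι] :
    W ≅ U ⊞ cokernel ι :=
  biprod.uniqueUpToIso _ _ (isBilimitBinaryBiconeOfIsSplitMonoOfCokernel (cokernelIsCokernel ι))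

lemma BichainCondition.of_isSplitMono {U W : A} (ι : U ⟶ W) [IsSplitMono ι]
    (h : BichainCondition W) : BichainCondition U :=
  (h.of_iso (isoBiprodCokernelOfIsSplitMono ι)).of_biprod

lemma CategoryTheory.Indecomposable.isZero_or_isIso_of_isSplitMono [Balanced A] {U Y : A}
    (hY : Indecomposable Y) (ι : U ⟶ Y) [IsSplitMono ι] : IsZero U ∨ IsIso ι := by
  refine (hY.2 _ _ (isoBiprodCokernelOfIsSplitMono ι)).imp_right fun hc => ?_
  have := Preadditive.epi_of_isZero_cokernel ι hc
  exact isIso_of_mono_of_epi ι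

end Summands

section ImagePow

variable {A : Type u} [Category.{v} A] [Abelian A] {Y : A} (f : End Y)

noncomputable def imagePowMap (n : ℕ) : image (f ^ n) ⟶ image (f ^ (n + 1)) :=
  image.map (Arrow.homMk' (𝟙 Y) f (by rw [Category.id_comp, End.pow_succ_eq_pow_comp]))

noncomputable def imagePowInclusion (n : ℕ) : image (f ^ (n + 1)) ⟶ image (f ^ n) :=
  image.map (Arrow.homMk' f (𝟙 Y) (by rw [Category.comp_id, End.pow_succ_eq_comp_pow]))

lemma imagePowMap_ι (n : ℕ) : imagePowMap f n ≫ image.ι (f ^ (n + 1)) = image.ι (f ^ n) ≫ f :=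
  image.map_ι _

lemma imagePowInclusion_ι (n : ℕ) :
    imagePowInclusion f n ≫ image.ι (f ^ n) = image.ι (f ^ (n + 1)) :=
  (image.map_ι _).trans (Category.comp_id _)

instance (n : ℕ) : Epi (imagePowMap f n) := by
  have h : factorThruImage (f ^ n) ≫ imagePowMap f n = factorThruImage (f ^ (n + 1)) :=
    (image.factor_map (Arrow.homMk' (𝟙 Y) f _)).trans (Category.id_comp _)
  have : Epi (factorThruImage (f ^ n) ≫ imagePowMap f n) := by rw [h]; infer_instance
  exact epi_of_epi (factorThruImage (f ^ n)) _

instance (n : ℕ) : Mono (imagePowInclusion f n) :=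
  mono_of_mono_fac (imagePowInclusion_ι f n)

end ImagePow

section Fitting

variable {A : Type u} [Category.{v} A] [Abelian A] {Y : A}

theorem CategoryTheory.Indecomposable.isIso_or_isNilpotent_of_bichainCondition
    (hY : Indecomposable Y) (h : BichainCondition Y) (f : End Y) : IsIso f ∨ IsNilpotent f := by
  have : Mono (f ^ 0) := by rw [pow_zero]; exact inferInstanceAs (Mono (𝟙 Y))
  obtain ⟨N, hN⟩ := h.of_iso (imageMonoIsoSource (f ^ 0)).symm (fun n => image (f ^ n))
    (imagePowMap f) (imagePowInclusion f) rfl inferInstance inferInstance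
  obtain ⟨_, _⟩ := hN N le_rfl
  set ι := image.ι (f ^ N)
  set g : End (image (f ^ N)) := imagePowMap f N ≫ imagePowInclusion f N
  have hg : g ≫ ι = ι ≫ f := by
    rw [Category.assoc, imagePowInclusion_ι, imagePowMap_ι]
  have : IsIso (g ^ N) := (isUnit_iff_isIso _).1 (((isUnit_iff_isIso g).2 inferInstance).pow N)
  -- Since `f` restricts to an automorphism of `image (f ^ N)`, this image is a summand of `Y`.
  have hgN : ι ≫ factorThruImage (f ^ N) = g ^ N := by
    rw [← cancel_mono ι, Category.assoc, image.fac, End.pow_comp_eq_comp_pow hg]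
  have : IsSplitMono ι := IsSplitMono.mk' ⟨factorThruImage (f ^ N) ≫ inv (g ^ N), by
    rw [← Category.assoc, hgN, IsIso.hom_inv_id]⟩
  rcases hY.isZero_or_isIso_of_isSplitMono ι with hz | hι
  · exact Or.inr ⟨N, by rw [← image.fac (f ^ N), hz.eq_zero_of_src (image.ι _), comp_zero]⟩
  · have hf : f = inv ι ≫ g ≫ ι := by rw [hg, IsIso.inv_hom_id_assoc]
    exact Or.inl (hf ▸ inferInstance)

theorem CategoryTheory.Indecomposable.isLocalRing_end_of_bichainCondition
    (hY : Indecomposable Y) (h : BichainCondition Y) : IsLocalRing (End Y) := by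
  have : Nontrivial (End Y) := ⟨⟨1, 0, fun h1 => hY.1 ((IsZero.iff_id_eq_zero Y).2 h1)⟩⟩
  refine IsLocalRing.of_isUnit_or_isUnit_one_sub_self fun f => ?_
  exact (hY.isIso_or_isNilpotent_of_bichainCondition h f).imp (isUnit_iff_isIso f).2
    IsNilpotent.isUnit_one_sub

end Fitting

section Decomposition

variable {A : Type u} [Category.{v} A] [Preadditive A] [HasFiniteBiproducts A]

def IsFiniteBiproductOfIndecomposables (X : A) : Prop :=
  ∃ (n : ℕ) (f : Fin n → A), Nonempty (X ≅ ⨁ f) ∧ ∀ i, Indecomposable (f i)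

namespace IsFiniteBiproductOfIndecomposables

lemma of_isZero {X : A} (hX : IsZero X) : IsFiniteBiproductOfIndecomposables X :=
  ⟨0, Fin.elim0, ⟨hX.iso <| (IsZero.iff_id_eq_zero _).2 <| biproduct.hom_ext _ _ fun j => j.elim0⟩,
    fun i => i.elim0⟩

lemma of_indecomposable {X : A} (hX : Indecomposable X) : IsFiniteBiproductOfIndecomposables X :=
  ⟨1, fun _ => X, ⟨(biproductUniqueIso fun _ : Fin 1 => X).symm⟩, fun _ => hX⟩

lemma of_iso_biprod {X U Z : A} (e : X ≅ U ⊞ Z) (hU : IsFiniteBiproductOfIndecomposables U)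
    (hZ : IsFiniteBiproductOfIndecomposables Z) : IsFiniteBiproductOfIndecomposables X := by
  obtain ⟨n, f₁, ⟨e₁⟩, h₁⟩ := hU
  obtain ⟨m, f₂, ⟨e₂⟩, h₂⟩ := hZ
  have h : ∀ j, Indecomposable (Sum.elim f₁ f₂ j) := Sum.rec h₁ h₂
  refine ⟨n + m, Sum.elim f₁ f₂ ∘ finSumFinEquiv.symm, ⟨?_⟩, fun i => h _⟩
  exact e ≪≫ biprod.mapIso e₁ e₂ ≪≫ biprodBiproductIso f₁ f₂ ≪≫
    biproduct.whiskerEquiv finSumFinEquiv (fun j => eqToIso (by simp))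

end IsFiniteBiproductOfIndecomposables

lemma exists_iso_biprod_of_not_isFiniteBiproductOfIndecomposables {X : A}
    (hX : ¬ IsFiniteBiproductOfIndecomposables X) :
    ∃ U Z : A, Nonempty (X ≅ U ⊞ Z) ∧ ¬ IsZero Z ∧ ¬ IsFiniteBiproductOfIndecomposables U := by
  have hX' : ¬ Indecomposable X := fun h => hX (.of_indecomposable h)
  simp only [Indecomposable, not_and, not_forall, not_or] at hX'
  obtain ⟨U, Z, e, hU, hZ⟩ := hX' fun h => hX (.of_isZero h)
  by_cases hU' : IsFiniteBiproductOfIndecomposables U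
  · exact ⟨Z, U, ⟨e ≪≫ biprod.braiding U Z⟩, hU, fun hZ' => hX (.of_iso_biprod e hU' hZ')⟩
  · exact ⟨U, Z, ⟨e⟩, hZ, hU'⟩

theorem BichainCondition.isFiniteBiproductOfIndecomposables {X : A} (h : BichainCondition X) :
    IsFiniteBiproductOfIndecomposables X := by
  by_contra hX
  choose next Z e hZ hnext using fun W : {W : A // ¬ IsFiniteBiproductOfIndecomposables W} =>
    exists_iso_biprod_of_not_isFiniteBiproductOfIndecomposables W.2
  let seq : ℕ → {W : A // ¬ IsFiniteBiproductOfIndecomposables W} :=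
    fun n => Nat.rec ⟨X, hX⟩ (fun _ W => ⟨next W, hnext W⟩) n
  obtain ⟨n, hn⟩ := h.exists_isZero_of_iso_biprod (fun n => (seq n).1) (fun n => Z (seq n)) rfl
    fun n => (e (seq n)).some
  exact hZ _ hn

end Decomposition

/-- Atiyah's Krull-Remak-Schmidt theorem: an object of an abelian category satisfying
the bi-chain condition admits a decomposition into a finite direct sum of indecomposable
objects having local endomorphism rings. -/
theorem krull_remak_schmidt_of_bichain {A : Type u} [Category.{v} A] [Abelian A]
    (X : A) (h : BichainCondition X) :
    ∃ (n : ℕ) (f : Fin n → A),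
      Nonempty (X ≅ ⨁ f) ∧ ∀ i, Indecomposable (f i) ∧ IsLocalRing (End (f i)) := by
  obtain ⟨n, f, ⟨e⟩, hf⟩ := h.isFiniteBiproductOfIndecomposables
  refine ⟨n, f, ⟨e⟩, fun i => ⟨hf i, (hf i).isLocalRing_end_of_bichainCondition ?_⟩⟩
  exact (h.of_iso e).of_isSplitMono (biproduct.ι f i)
end
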